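/- arXiv:2212.09604 — 13 statements merged into one kernel-verified Lean document; each statement's English description precedes it below -/
import Mathlib

section
/- Let 0 < p < q be coprime integers. Then the maximum signature satisfies the recursion σ̂(p, q+p) = σ̂(p, q) + p²/2 if p is even, and σ̂(p, q+p) = σ̂(p, q) + (p²−1)/2 if p is odd. -/
/-- Number of integer pairs `(i, j)` with `0 < i < p`, `0 < j < q` and
`t < i/p + j/q < t + 1` (Litherland's lattice-point count). -/
noncomputable def latticeCount (p q : ℕ) (t : ℝ) : ℕ :=
  Set.ncard {ij : ℕ × ℕ | 0 < ij.1 ∧ ij.1 < p ∧ 0 < ij.2 ∧ ij.2 < q ∧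
    t < (ij.1 : ℝ) / p + (ij.2 : ℝ) / q ∧ (ij.1 : ℝ) / p + (ij.2 : ℝ) / q < t + 1}

/-- The Levine–Tristram signature of the torus knot `T(p,q)` at `e^{2πit}`,
via Litherland's formula: `σ_t(p,q) = 2 N_t(p,q) − (p−1)(q−1)`. -/
noncomputable def sigmaT (p q : ℕ) (t : ℝ) : ℤ :=
  2 * (latticeCount p q t : ℤ) - ((p : ℤ) - 1) * ((q : ℤ) - 1)

/-- The maximum signature `σ̂(p,q) = sup_{t ∈ (0,1)} σ_t(p,q)`. -/
noncomputable def sigmaMax (p q : ℕ) : ℤ :=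
  sSup (sigmaT p q '' Set.Ioo (0 : ℝ) 1)

/-- The classical signature `σ(p,q) = σ_{1/2}(p,q)`. -/
noncomputable def sigmaClassical (p q : ℕ) : ℤ :=
  sigmaT p q (1 / 2)

/-
By Litherland's count, `σ_t(p,q)` only changes when `t·pq` crosses an integer, so its supremum
over `(0,1)` is attained at a point `t = (2k+1)/(2pq)` with `0 ≤ k < pq`. At such a point
column `i` of the rectangle `(0,p) × (0,q)` misses `⌊|2k+1-2iq|/(2p)⌋` lattice points; calling
the total `D_q(k)`, we get `σ̂(p,q) = (p-1)(q-1) - 2 min D_q`.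

Replacing `q` by `q+p` and `k` by `k + jp`, where `(j-1)q ≤ k < (j+1)q`, adds exactly `|j-i|` to the
loss in column `i`, and since `p ≤ q` every window for `q+p` arises this way. Hence
`min D_{q+p} = min D_q + min_j ∑ |j-i|`: the second minimum is attained at the median `j = ⌊p/2⌋`,
and so is the first, because `D_q` is symmetric under `k ↦ pq-1-k` and does not increase when `k`
moves by `q` towards the centre.
-/

open Finset

namespace TorusSignature

def strip (p q : ℕ) (k : ℤ) : Finset (ℕ × ℕ) :=
  (Ico 1 p ×ˢ Ico 1 q).filter fun ij : ℕ × ℕ =>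
    k < ij.1 * q + ij.2 * p ∧ ij.1 * q + ij.2 * p ≤ k + p * q

lemma latticeCount_eq_card {p q : ℕ} (hp : 0 < p) (hq : 0 < q) (t : ℝ) :
    latticeCount p q t = #((Ico 1 p ×ˢ Ico 1 q).filter fun ij : ℕ × ℕ =>
      t * (p * q) < ((ij.1 * q + ij.2 * p : ℤ) : ℝ) ∧
        ((ij.1 * q + ij.2 * p - p * q : ℤ) : ℝ) < t * (p * q)) := by
  have hp' : (0 : ℝ) < p := by exact_mod_cast hp
  have hq' : (0 : ℝ) < q := by exact_mod_cast hq
  rw [latticeCount, ← Set.ncard_coe_finset]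
  congr 1
  ext ⟨i, j⟩
  have hsum : (i : ℝ) / p + j / q = ((i * q + j * p : ℤ) : ℝ) / (p * q) := by
    push_cast; field_simp
  simp only [Set.mem_ofPred_eq, coe_filter, mem_product, mem_Ico, hsum,
    lt_div_iff₀ (by positivity : (0 : ℝ) < p * q),
    div_lt_iff₀ (by positivity : (0 : ℝ) < p * q), add_mul, one_mul, Int.cast_sub,
    sub_lt_iff_lt_add, Nat.one_le_iff_ne_zero, pos_iff_ne_zero]
  push_cast
  tauto

lemma add_half_lt_intCast_iff {a b : ℤ} : (a + 1 / 2 : ℝ) < b ↔ a < b := by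
  constructor
  · intro h
    exact_mod_cast (by linarith : (a : ℝ) < b)
  · intro h
    have : (a : ℝ) + 1 ≤ b := by exact_mod_cast h
    linarith

lemma intCast_lt_add_half_iff {a b : ℤ} : (b : ℝ) < a + 1 / 2 ↔ b ≤ a := by
  constructor
  · intro h
    have : (b : ℝ) < a + 1 := by linarith
    exact Int.lt_add_one_iff.1 (by exact_mod_cast this)
  · intro h
    have : (b : ℝ) ≤ a := by exact_mod_cast h
    linarith

lemma latticeCount_grid {p q : ℕ} (hp : 0 < p) (hq : 0 < q) (k : ℤ) :
    latticeCount p q ((2 * k + 1) / (2 * p * q)) = #(strip p q k) := by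
  have hp' : (0 : ℝ) < p := by exact_mod_cast hp
  have hq' : (0 : ℝ) < q := by exact_mod_cast hq
  have ht : (2 * k + 1) / (2 * p * q) * (p * q : ℝ) = k + 1 / 2 := by field_simp
  rw [latticeCount_eq_card hp hq, ht, strip]
  refine congrArg card (filter_congr fun ij _ => ?_)
  rw [add_half_lt_intCast_iff, intCast_lt_add_half_iff]
  omega

lemma latticeCount_le_grid {p q : ℕ} (hp : 0 < p) (hq : 0 < q) (t : ℝ) :
    latticeCount p q t ≤ #(strip p q (⌈t * (p * q)⌉ - 1)) := by
  rw [latticeCount_eq_card hp hq, strip]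
  refine card_le_card (monotone_filter_right _ fun ij _ h => ?_)
  have h1 := Int.ceil_le.2 h.1.le
  have h2 := Int.lt_ceil.2 h.2
  omega

def deficit (p q : ℕ) (k : ℤ) : ℤ := ∑ i ∈ Ico 1 p, |2 * k + 1 - 2 * i * q| / (2 * p)

lemma abs_two_mul_add_one_ediv {a c : ℤ} (hc : 0 < c) :
    |2 * a + 1| / (2 * c) = max (a / c) (-(a / c) - 1) := by
  have hdiv := Int.mul_ediv_add_emod a c
  have hr0 := Int.emod_nonneg a hc.ne'
  have hrc := Int.emod_lt_of_pos a hc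
  rcases le_or_gt 0 a with ha | ha
  · have hd : 0 ≤ a / c := Int.ediv_nonneg ha hc.le
    rw [abs_of_nonneg (by omega), max_eq_left (by omega), Int.ediv_eq_iff_of_pos (by omega)]
    constructor <;> linarith
  · have hd : a / c < 0 := Int.ediv_neg_of_neg_of_pos ha hc
    rw [abs_of_neg (by omega), max_eq_right (by omega), Int.ediv_eq_iff_of_pos (by omega)]
    constructor <;> linarith

lemma card_window (p q : ℕ) (hp : 0 < p) {a : ℤ} (h1 : -(p * q) ≤ a) (h2 : a < p * q) :
    (#((Ico 1 q).filter fun j : ℕ => a < j * p ∧ j * p ≤ a + p * q) : ℤ) =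
      q - 1 - |2 * a + 1| / (2 * p) := by
  have hp' : (0 : ℤ) < p := by exact_mod_cast hp
  set d := a / p
  have hcond : ∀ j : ℕ, (a < j * p ∧ j * p ≤ a + p * q) ↔ (d < j ∧ j ≤ d + q) := fun j => by
    rw [Int.ediv_lt_iff_lt_mul hp', ← Int.add_mul_ediv_left a (q : ℤ) hp'.ne',
      Int.le_ediv_iff_mul_le hp']
  have hd1 : -q ≤ d := (Int.le_ediv_iff_mul_le hp').2 (by linarith)
  have hd2 : d < q := (Int.ediv_lt_iff_lt_mul hp').2 (by linarith)
  have hset : (Ico 1 q).filter (fun j : ℕ => d < j ∧ j ≤ d + q) =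
      Ico (max 1 (d + 1)).toNat (min (q : ℤ) (d + q + 1)).toNat := by
    ext j
    simp only [mem_filter, mem_Ico]
    omega
  rw [filter_congr (fun j _ => hcond j), hset, Nat.card_Ico, abs_two_mul_add_one_ediv hp']
  omega

lemma card_strip_column {p q : ℕ} {k : ℤ} (hk : k ∈ Set.Ico (0 : ℤ) (p * q)) {i : ℕ}
    (hi : i ∈ Ico 1 p) :
    (#((Ico 1 q).filter fun j : ℕ => k < i * q + j * p ∧ i * q + j * p ≤ k + p * q) : ℤ) =
      q - 1 - |2 * k + 1 - 2 * i * q| / (2 * p) := by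
  obtain ⟨hk0, hk1⟩ := hk
  obtain ⟨hi1, hip⟩ := mem_Ico.1 hi
  have hiq : (i : ℤ) * q ≤ p * q := mul_le_mul_of_nonneg_right (by omega) (by positivity)
  have hcol := card_window p q (by omega) (a := k - i * q) (by nlinarith) (by nlinarith)
  rw [show 2 * (k - i * q) + 1 = 2 * k + 1 - 2 * i * q by ring] at hcol
  rw [← hcol]
  congr 2
  refine filter_congr fun j _ => ?_
  constructor <;> rintro ⟨h1, h2⟩ <;> constructor <;> linarith

lemma card_strip {p q : ℕ} (hp : 0 < p) {k : ℤ} (hk : k ∈ Set.Ico (0 : ℤ) (p * q)) :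
    (#(strip p q k) : ℤ) = (p - 1) * (q - 1) - deficit p q k := by
  rw [strip, card_filter, sum_product]
  simp_rw [← card_filter]
  push_cast
  rw [sum_congr rfl fun i hi => card_strip_column hk hi, sum_sub_distrib, sum_const,
    Nat.card_Ico, nsmul_eq_mul, deficit]
  push_cast [hp]
  ring

lemma grid_mem_Ioo {p q : ℕ} {k : ℤ} (hk : k ∈ Set.Ico (0 : ℤ) (p * q)) :
    ((2 * k + 1) / (2 * p * q) : ℝ) ∈ Set.Ioo 0 1 := by
  obtain ⟨hk0, hk1⟩ := hk
  have hk0' : (0 : ℝ) ≤ k := by exact_mod_cast hk0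
  have hk1' : (k : ℝ) + 1 ≤ p * q := by exact_mod_cast hk1
  constructor
  · exact div_pos (by linarith) (by nlinarith)
  · rw [div_lt_one (by nlinarith)]
    linarith

lemma sigmaT_grid {p q : ℕ} (hp : 0 < p) (hq : 0 < q) {k : ℤ}
    (hk : k ∈ Set.Ico (0 : ℤ) (p * q)) :
    sigmaT p q ((2 * k + 1) / (2 * p * q)) = (p - 1) * (q - 1) - 2 * deficit p q k := by
  rw [sigmaT, latticeCount_grid hp hq, card_strip hp hk]
  ring

lemma exists_sigmaT_le_grid {p q : ℕ} (hp : 0 < p) (hq : 0 < q) {t : ℝ}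
    (ht : t ∈ Set.Ioo 0 1) :
    ∃ k ∈ Set.Ico (0 : ℤ) (p * q), sigmaT p q t ≤ sigmaT p q ((2 * k + 1) / (2 * p * q)) := by
  obtain ⟨ht0, ht1⟩ := ht
  have hpq : (0 : ℝ) < p * q := by positivity
  have hceil0 : 0 < ⌈t * (p * q)⌉ := Int.ceil_pos.2 (by positivity)
  have hceil1 : ⌈t * (p * q)⌉ ≤ p * q := Int.ceil_le.2 (by push_cast; nlinarith)
  refine ⟨⌈t * (p * q)⌉ - 1, ⟨by omega, by omega⟩, ?_⟩
  rw [sigmaT, sigmaT, latticeCount_grid hp hq]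
  have := latticeCount_le_grid hp hq t
  omega

lemma exists_isLeast_deficit {p q : ℕ} (hp : 0 < p) (hq : 0 < q) :
    ∃ m, IsLeast (deficit p q '' Set.Ico 0 (p * q)) m := by
  obtain ⟨k, hk, hmin⟩ := Set.exists_min_image _ (deficit p q) (Set.finite_Ico _ _)
    ⟨0, le_rfl, mul_pos (Int.natCast_pos.2 hp) (Int.natCast_pos.2 hq)⟩
  exact ⟨_, ⟨k, hk, rfl⟩, by rintro _ ⟨k', hk', rfl⟩; exact hmin k' hk'⟩

lemma sigmaMax_eq_of_isLeast {p q : ℕ} (hp : 0 < p) (hq : 0 < q) {m : ℤ}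
    (h : IsLeast (deficit p q '' Set.Ico 0 (p * q)) m) :
    sigmaMax p q = (p - 1) * (q - 1) - 2 * m := by
  obtain ⟨⟨k, hk, rfl⟩, hmin⟩ := h
  refine IsGreatest.csSup_eq ⟨⟨_, grid_mem_Ioo hk, sigmaT_grid hp hq hk⟩, ?_⟩
  rintro _ ⟨t, ht, rfl⟩
  obtain ⟨k', hk', hle⟩ := exists_sigmaT_le_grid hp hq ht
  rw [sigmaT_grid hp hq hk'] at hle
  linarith [hmin ⟨k', hk', rfl⟩]

def distSum (p : ℕ) (j : ℤ) : ℤ := ∑ i ∈ Ico 1 p, |j - i|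

lemma sum_Ico_one_reflect {M : Type*} [AddCommMonoid M] (p : ℕ) (f : ℕ → M) :
    ∑ i ∈ Ico 1 p, f (p - i) = ∑ i ∈ Ico 1 p, f i := by
  refine sum_nbij' (p - ·) (p - ·) ?_ ?_ ?_ ?_ (fun _ _ => rfl) <;>
    intro i hi <;> simp only [mem_Ico] at hi ⊢ <;> omega

lemma abs_sub_half_add_abs_sub_half (p i : ℕ) (hi : i ≤ p) :
    |((p / 2 : ℕ) : ℤ) - i| + |((p / 2 : ℕ) : ℤ) - (p - i : ℕ)| = |(p : ℤ) - 2 * i| := by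
  rcases le_or_gt i (p / 2) with h | h
  · rw [abs_of_nonneg (by omega), abs_of_nonpos (by omega), abs_of_nonneg (by omega)]; omega
  · rw [abs_of_nonpos (by omega), abs_of_nonneg (by omega), abs_of_nonpos (by omega)]; omega

/-- Pairing `i` with `p - i` reduces minimality to `|p - 2i| ≤ |j - i| + |j - (p - i)|`,
with equality at the median `j = ⌊p/2⌋`. -/
lemma distSum_half_le (p : ℕ) (j : ℤ) : distSum p (p / 2 : ℕ) ≤ distSum p j := by
  have two_mul_distSum : ∀ c : ℤ,
      2 * distSum p c = ∑ i ∈ Ico 1 p, (|c - i| + |c - (p - i : ℕ)|) := fun c => by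
    rw [sum_add_distrib, sum_Ico_one_reflect p (fun i => |c - i|), distSum, two_mul]
  suffices 2 * distSum p (p / 2 : ℕ) ≤ 2 * distSum p j by omega
  rw [two_mul_distSum, two_mul_distSum]
  refine sum_le_sum fun i hi => ?_
  have hip : i ≤ p := (mem_Ico.1 hi).2.le
  rw [abs_sub_half_add_abs_sub_half p i hip]
  calc |(p : ℤ) - 2 * i| = |(j - i) - (j - (p - i : ℕ))| := by congr 1; push_cast [hip]; ring
    _ ≤ |j - i| + |j - (p - i : ℕ)| := abs_sub _ _

lemma distSum_add_two_half (p : ℕ) :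
    distSum (p + 2) ((p + 2) / 2 : ℕ) = distSum p (p / 2 : ℕ) + p := by
  rcases Nat.eq_zero_or_pos p with rfl | hp
  · rfl
  have hhalf : (p + 2) / 2 = p / 2 + 1 := by omega
  have hshift :
      ∑ i ∈ Ico 1 p, |((p / 2 + 1 : ℕ) : ℤ) - (i + 1 : ℕ)| = distSum p (p / 2 : ℕ) :=
    sum_congr rfl fun i _ => by push_cast; ring_nf
  rw [hhalf, distSum, sum_eq_sum_Ico_succ_bot (show 1 < p + 2 by omega),
    sum_Ico_succ_top (show 1 + 1 ≤ p + 1 by omega), ← hshift,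
    ← sum_Ico_add' (fun i : ℕ => |((p / 2 + 1 : ℕ) : ℤ) - i|)]
  have hends :
      |((p / 2 + 1 : ℕ) : ℤ) - (1 : ℕ)| + |((p / 2 + 1 : ℕ) : ℤ) - (p + 1 : ℕ)| = p := by
    rw [abs_of_nonneg (by omega), abs_of_nonpos (by omega)]; omega
  linarith

lemma two_mul_distSum_half (p : ℕ) :
    2 * distSum p (p / 2 : ℕ) = p * ((p : ℤ) - 1) - (p : ℤ) ^ 2 / 2 := by
  induction p using Nat.twoStepInduction with
  | zero => rfl
  | one => rfl
  | more p ih _ =>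
    rw [distSum_add_two_half, mul_add, ih]
    push_cast
    have : ((p : ℤ) + 2) ^ 2 = p ^ 2 + 2 * (2 * p + 2) := by ring
    rw [this, Int.add_mul_ediv_left _ _ two_ne_zero]
    ring

lemma abs_add_mul_ediv {a b c : ℤ} (hc : 0 < c) (hab : 0 ≤ a * b) :
    |a + c * b| / c = |a| / c + |b| := by
  have : |a + c * b| = |a| + c * |b| := by
    rw [(abs_add_eq_add_abs_iff _ _).2, abs_mul, abs_of_pos hc]
    rcases mul_nonneg_iff.1 hab with ⟨ha, hb⟩ | ⟨ha, hb⟩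
    · exact Or.inl ⟨ha, mul_nonneg hc.le hb⟩
    · exact Or.inr ⟨ha, mul_nonpos_of_nonneg_of_nonpos hc.le hb⟩
  rw [this, Int.add_mul_ediv_left _ _ hc.ne']

lemma deficit_reflect (p q : ℕ) (k : ℤ) : deficit p q (p * q - 1 - k) = deficit p q k := by
  rw [deficit, ← sum_Ico_one_reflect p]
  refine sum_congr rfl fun i hi => ?_
  have hip : i ≤ p := (mem_Ico.1 hi).2.le
  rw [← abs_neg]
  push_cast [hip]
  ring_nf

lemma deficit_add_le (p q : ℕ) {k : ℤ} (hk : 0 ≤ k) (h : 2 * k + 1 ≤ (p - 1) * q) :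
    deficit p q (k + q) ≤ deficit p q k := by
  have hp : 1 ≤ p := by
    by_contra! hp
    obtain rfl : p = 0 := by omega
    push_cast at h
    nlinarith
  set g : ℕ → ℤ := fun i => |2 * k + 1 - 2 * i * q| / (2 * p)
  have hk : deficit p q k = ∑ i ∈ range (p - 1), g (i + 1) := by
    rw [deficit, sum_Ico_eq_sum_range]
    simp only [g, add_comm 1]
  have hkq : deficit p q (k + q) = ∑ i ∈ range (p - 1), g i := by
    rw [deficit, sum_Ico_eq_sum_range]
    refine sum_congr rfl fun i _ => ?_
    simp only [g]
    push_cast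
    ring_nf
  have hends : g 0 ≤ g (p - 1) := by
    refine Int.ediv_le_ediv (by positivity) ?_
    push_cast [hp]
    rw [abs_of_nonneg (by omega)]
    refine le_trans ?_ (neg_le_abs _)
    linarith
  rw [hk, hkq, ← sub_nonneg, ← sum_sub_distrib, sum_range_sub]
  linarith

lemma deficit_add_mul (p q : ℕ) {k j : ℤ} (h1 : (j - 1) * q ≤ k) (h2 : k < (j + 1) * q) :
    deficit p (q + p) (k + j * p) = deficit p q k + distSum p j := by
  rw [deficit, deficit, distSum, ← sum_add_distrib]
  refine sum_congr rfl fun i hi => ?_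
  have hi := mem_Ico.1 hi
  have hsplit : 2 * (k + j * p) + 1 - 2 * i * (q + p : ℕ) =
      (2 * k + 1 - 2 * i * q) + 2 * p * (j - i) := by push_cast; ring
  rw [hsplit, abs_add_mul_ediv (by omega)]
  rcases lt_trichotomy (i : ℤ) j with h | rfl | h
  · have : (i : ℤ) * q ≤ (j - 1) * q := mul_le_mul_of_nonneg_right (by omega) (by positivity)
    exact mul_nonneg (by linarith) (by linarith)
  · rw [sub_self, mul_zero]
  · have : (j + 1) * q ≤ (i : ℤ) * q := mul_le_mul_of_nonneg_right (by omega) (by positivity)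
    exact mul_nonneg_of_nonpos_of_nonpos (by linarith) (by linarith)

lemma exists_central_le (p q : ℕ) (hq : 0 < q) (k : ℤ) (hk : 0 ≤ k)
    (hlt : 2 * k + 1 < (p + 1) * q) :
    ∃ k' : ℤ, (p - 1) * q ≤ 2 * k' + 1 ∧ 2 * k' + 1 < (p + 1) * q ∧
      deficit p q k' ≤ deficit p q k := by
  induction h : ((p - 1) * q - (2 * k + 1)).toNat using Nat.strong_induction_on
    generalizing k with
  | _ n ih =>
  by_cases hc : (p - 1) * q ≤ 2 * k + 1
  · exact ⟨k, hc, hlt, le_rfl⟩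
  · have hpq : ((p : ℤ) + 1) * q = (p - 1) * q + 2 * q := by ring
    obtain ⟨k', h1, h2, h3⟩ := ih _ (by omega) (k + q) (by omega) (by omega) rfl
    exact ⟨k', h1, h2, h3.trans (deficit_add_le p q hk (by omega))⟩

lemma exists_central_argmin {p q : ℕ} (hq : 0 < q) {m : ℤ}
    (h : IsLeast (deficit p q '' Set.Ico 0 (p * q)) m) :
    ∃ k : ℤ, (p - 1) * q ≤ 2 * k + 1 ∧ 2 * k + 1 < (p + 1) * q ∧ deficit p q k = m := by
  obtain ⟨⟨k₀, ⟨hk₀, hk₀'⟩, rfl⟩, hmin⟩ := h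
  have hp : (1 : ℤ) ≤ p := by
    by_contra! hp
    nlinarith
  obtain ⟨k₁, hk₁, hhalf, hk₁eq⟩ :
      ∃ k₁ : ℤ, 0 ≤ k₁ ∧ 2 * k₁ + 1 ≤ p * q ∧ deficit p q k₁ = deficit p q k₀ := by
    rcases le_or_gt (2 * k₀ + 1) (p * q) with h | h
    · exact ⟨k₀, hk₀, h, rfl⟩
    · exact ⟨p * q - 1 - k₀, by omega, by omega, deficit_reflect p q k₀⟩
  obtain ⟨k, hlo, hhi, hle⟩ := exists_central_le p q hq k₁ hk₁ (by nlinarith)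
  have hk : k ∈ Set.Ico (0 : ℤ) (p * q) := ⟨by nlinarith, by nlinarith⟩
  exact ⟨k, hlo, hhi, le_antisymm (hle.trans hk₁eq.le) (hmin ⟨k, hk, rfl⟩)⟩

lemma exists_deficit_add_eq {p q : ℕ} (hpq : p ≤ q) {k' : ℤ}
    (hk' : k' ∈ Set.Ico (0 : ℤ) (p * (q + p : ℕ))) :
    ∃ k ∈ Set.Ico (0 : ℤ) (p * q), ∃ j : ℤ,
      deficit p (q + p) k' = deficit p q k + distSum p j := by
  obtain ⟨hk'0, hk'1⟩ := hk'
  push_cast at hk'1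
  set Q : ℤ := q + p
  have hQ : 0 < Q := by nlinarith
  set j := (k' + q) / Q
  have hj1 : j * Q ≤ k' + q := Int.ediv_mul_le _ hQ.ne'
  have hj2 : k' + q < (j + 1) * Q := Int.lt_ediv_add_one_mul_self _ hQ
  have hj0 : 0 ≤ j := Int.ediv_nonneg (by omega) hQ.le
  have hjp : j ≤ p := by
    have : j < p + 1 := (Int.ediv_lt_iff_lt_mul hQ).2 (by nlinarith)
    omega
  have hlo : (j - 1) * q ≤ k' - j * p := by linarith
  have hhi : k' - j * p < (j + 1) * q := by linarith
  refine ⟨k' - j * p, ⟨?_, ?_⟩, j, ?_⟩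
  · rcases hj0.eq_or_lt with h | h
    · rw [← h]; omega
    · nlinarith
  · rcases hjp.lt_or_eq with h | h
    · nlinarith
    · rw [h]; linarith
  · rw [← deficit_add_mul p q hlo hhi, sub_add_cancel]

lemma isLeast_deficit_add {p q : ℕ} (hp : 0 < p) (hpq : p < q) {m : ℤ}
    (h : IsLeast (deficit p q '' Set.Ico 0 (p * q)) m) :
    IsLeast (deficit p (q + p) '' Set.Ico 0 (p * (q + p : ℕ))) (m + distSum p (p / 2 : ℕ)) := by
  refine ⟨?_, ?_⟩
  · obtain ⟨k, hlo, hhi, rfl⟩ := exists_central_argmin (hp.trans hpq) h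
    set r : ℤ := ((p / 2 : ℕ) : ℤ)
    have hr : 2 * r ≤ p ∧ p ≤ 2 * r + 1 ∧ r + 1 ≤ p := by omega
    have hq : (0 : ℤ) ≤ q := by positivity
    have hlo' : (r - 1) * q ≤ k := by nlinarith
    have hhi' : k < (r + 1) * q := by nlinarith
    have hk : 0 ≤ 2 * k + 1 := by nlinarith
    refine ⟨k + r * p, ⟨by nlinarith, ?_⟩, deficit_add_mul p q hlo' hhi'⟩
    push_cast
    nlinarith
  · rintro _ ⟨k', hk', rfl⟩
    obtain ⟨k, hk, j, hj⟩ := exists_deficit_add_eq hpq.le hk'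
    rw [hj]
    exact add_le_add (h.2 ⟨k, hk, rfl⟩) (distSum_half_le p j)

lemma ite_even_sq_div_two (p : ℕ) :
    (if Even p then (p : ℤ) ^ 2 / 2 else ((p : ℤ) ^ 2 - 1) / 2) = (p : ℤ) ^ 2 / 2 := by
  split_ifs with h
  · rfl
  · obtain ⟨m, rfl⟩ := Nat.not_even_iff_odd.1 h
    push_cast
    have : ((2 * (m : ℤ) + 1) ^ 2) = 2 * (2 * m ^ 2 + 2 * m) + 1 := by ring
    rw [this]
    omega

end TorusSignature

open TorusSignature in
theorem sigmaMax_add_p_general (p q : ℕ) (hp : 0 < p) (hpq : p < q) :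
    sigmaMax p (q + p) =
      sigmaMax p q + (if Even p then (p : ℤ) ^ 2 / 2 else ((p : ℤ) ^ 2 - 1) / 2) := by
  have hq : 0 < q := hp.trans hpq
  obtain ⟨m, hm⟩ := exists_isLeast_deficit hp hq
  rw [sigmaMax_eq_of_isLeast hp (by omega) (isLeast_deficit_add hp hpq hm),
    sigmaMax_eq_of_isLeast hp hq hm, ite_even_sq_div_two]
  have := two_mul_distSum_half p
  push_cast at this ⊢
  linarith

theorem sigmaMax_add_p (p q : ℕ) (hp : 0 < p) (hpq : p < q) (hco : Nat.Coprime p q) :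
    sigmaMax p (q + p) =
      sigmaMax p q + (if Even p then (p : ℤ) ^ 2 / 2 else ((p : ℤ) ^ 2 - 1) / 2) :=
  sigmaMax_add_p_general p q hp hpq
end

section
/- Let 0 < p < q be coprime integers. Then there exists a rational number t with 1/2 − 1/q < t ≤ 1/2 such that σ_t(p,q) = σ̂(p,q); in particular the supremum defining σ̂(p,q) is attained in the interval (1/2 − 1/q, 1/2]. -/
open Finset

def windowCount (p q m : ℕ) : ℕ :=
  #{ij ∈ Ioo 0 p ×ˢ Ioo 0 q | ij.1 * q + ij.2 * p ∈ Ioc m (m + p * q)}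

lemma latticeCount_eq_card {p q : ℕ} (hp : 0 < p) (hq : 0 < q) (t : ℝ) :
    latticeCount p q t = #{ij ∈ Ioo 0 p ×ˢ Ioo 0 q |
      t * (p * q) < ((ij.1 * q + ij.2 * p : ℕ) : ℝ) ∧
        ((ij.1 * q + ij.2 * p : ℕ) : ℝ) < t * (p * q) + p * q} := by
  have hpq : (0 : ℝ) < p * q := by positivity
  rw [latticeCount, ← Set.ncard_coe_finset]
  congr 1
  ext ⟨i, j⟩
  have hsum : (i : ℝ) / p + j / q = ((i * q + j * p : ℕ) : ℝ) / (p * q) := by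
    push_cast
    field_simp
  simp only [Set.mem_ofPred_eq, coe_filter, mem_product, mem_Ioo, hsum, lt_div_iff₀ hpq,
    div_lt_iff₀ hpq, add_mul, one_mul, and_assoc]

lemma latticeCount_le_windowCount {p q m : ℕ} (hp : 0 < p) (hq : 0 < q) {t : ℝ}
    (hm : (m : ℝ) ≤ t * (p * q)) (hm' : t * (p * q) < m + 1) :
    latticeCount p q t ≤ windowCount p q m := by
  rw [latticeCount_eq_card hp hq]
  refine card_le_card fun ij => ?_
  simp only [mem_filter, mem_Ioc, and_imp]
  intro hij h1 h2
  have h2' : ((ij.1 * q + ij.2 * p : ℕ) : ℝ) < (m + 1 + p * q : ℕ) := by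
    push_cast at h2 ⊢
    linarith
  have : ij.1 * q + ij.2 * p < m + 1 + p * q := by exact_mod_cast h2'
  exact ⟨hij, by exact_mod_cast hm.trans_lt h1, by omega⟩

lemma windowCount_le_latticeCount {p q m : ℕ} (hp : 0 < p) (hq : 0 < q) {t : ℝ}
    (hm : (m : ℝ) < t * (p * q)) (hm' : t * (p * q) < m + 1) :
    windowCount p q m ≤ latticeCount p q t := by
  rw [latticeCount_eq_card hp hq]
  refine card_le_card fun ij => ?_
  simp only [mem_filter, mem_Ioc, and_imp]
  intro hij h1 h2
  have h1' : ((m + 1 : ℕ) : ℝ) ≤ (ij.1 * q + ij.2 * p : ℕ) := by exact_mod_cast h1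
  have h2' : ((ij.1 * q + ij.2 * p : ℕ) : ℝ) ≤ (m + p * q : ℕ) := by exact_mod_cast h2
  push_cast at h1' h2' ⊢
  exact ⟨hij, by linarith, by linarith⟩

lemma exists_latticeCount_le_windowCount {p q : ℕ} (hp : 0 < p) (hq : 0 < q) {t : ℝ}
    (ht : t ∈ Set.Ico 0 1) : ∃ m < p * q, latticeCount p q t ≤ windowCount p q m := by
  have hpq : (0 : ℝ) < p * q := by positivity
  have htpq : 0 ≤ t * (p * q) := mul_nonneg ht.1 hpq.le
  refine ⟨⌊t * (p * q)⌋₊, ?_, latticeCount_le_windowCount hp hq (Nat.floor_le htpq)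
    (Nat.lt_floor_add_one _)⟩
  rw [Nat.floor_lt htpq]
  push_cast
  nlinarith [ht.2]

lemma latticeCount_midpoint {p q : ℕ} (hp : 0 < p) (hq : 0 < q) (m : ℕ) :
    latticeCount p q ((2 * m + 1) / (2 * (p * q))) = windowCount p q m := by
  have hmid : (2 * m + 1) / (2 * (p * q)) * (p * q) = (m + 1 / 2 : ℝ) := by
    field_simp
  exact le_antisymm (latticeCount_le_windowCount hp hq (by linarith) (by linarith))
    (windowCount_le_latticeCount hp hq (by linarith) (by linarith))

lemma sigmaMax_eq_sigmaT_of_isMaxOn {p q : ℕ} {t : ℝ} (ht : t ∈ Set.Ioo 0 1)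
    (hmax : IsMaxOn (latticeCount p q) (Set.Ioo 0 1) t) : sigmaMax p q = sigmaT p q t := by
  refine IsGreatest.csSup_eq ⟨Set.mem_image_of_mem _ ht, ?_⟩
  rintro _ ⟨s, hs, rfl⟩
  have := isMaxOn_iff.1 hmax s hs
  simp only [sigmaT]
  omega

lemma windowCount_symm {p q m : ℕ} (hm : m < p * q) :
    windowCount p q (p * q - 1 - m) = windowCount p q m := by
  have reflect : ∀ {i j}, 0 < i ∧ i < p → 0 < j ∧ j < q →
      (p - i) * q + (q - j) * p + (i * q + j * p) = 2 * (p * q) := by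
    intro i j hi hj
    have h1 := Nat.sub_mul p i q
    have h2 := Nat.sub_mul q j p
    have h3 : i * q ≤ p * q := Nat.mul_le_mul_right q hi.2.le
    have h4 : j * p ≤ q * p := Nat.mul_le_mul_right p hj.2.le
    have h5 := Nat.mul_comm q p
    omega
  refine card_nbij' (fun ij => (p - ij.1, q - ij.2)) (fun ij => (p - ij.1, q - ij.2))
    ?_ ?_ ?_ ?_ <;> rintro ⟨i, j⟩ hij <;>
    simp only [mem_coe, mem_filter, mem_product, mem_Ioo, mem_Ioc, Prod.mk.injEq] at hij ⊢
  all_goals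
    have := reflect hij.1.1 hij.1.2
    omega

lemma card_filter_Ioo_sub_one_add_ite (P : ℕ → Prop) [DecidablePred P] (n : ℕ) :
    #{j ∈ Ioo 0 (n + 1) | P (j - 1)} + (if P n then 1 else 0) =
      #{j ∈ Ioo 0 (n + 1) | P j} + (if P 0 then 1 else 0) := by
  simp only [card_filter, ← Ico_add_one_left_eq_Ioo, sum_Ico_eq_sum_range, zero_add,
    Nat.add_sub_cancel, Nat.add_sub_cancel_left]
  rw [← sum_range_succ (fun j => if P j then 1 else 0), sum_range_succ']
  simp only [add_comm 1]

lemma windowCount_eq_sum (p q m : ℕ) :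
    windowCount p q m = ∑ i ∈ Ioo 0 p, #{j ∈ Ioo 0 q | i * q + j * p ∈ Ioc m (m + p * q)} := by
  simp only [windowCount, card_filter, sum_product]

-- Both sides count the window with `j` running over `[0, q)` instead of `(0, q)`.
lemma windowCount_add_card_filter {p q : ℕ} (hq : 0 < q) (m : ℕ) :
    windowCount p q m + #{i ∈ Ioo 0 p | i * q ∈ Ioc m (m + p * q)} =
      windowCount p q (m + p) + #{i ∈ Ioo 0 p | i * q + (q - 1) * p ∈ Ioc m (m + p * q)} := by
  obtain ⟨n, rfl⟩ := Nat.exists_eq_add_one_of_ne_zero hq.ne'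
  rw [windowCount_eq_sum, windowCount_eq_sum, card_filter, card_filter, ← sum_add_distrib,
    ← sum_add_distrib]
  refine sum_congr rfl fun i _ => ?_
  have hshift : #{j ∈ Ioo 0 (n + 1) | i * (n + 1) + j * p ∈ Ioc (m + p) (m + p + p * (n + 1))} =
      #{j ∈ Ioo 0 (n + 1) | i * (n + 1) + (j - 1) * p ∈ Ioc m (m + p * (n + 1))} := by
    refine congrArg card (filter_congr fun j hj => ?_)
    obtain ⟨j, rfl⟩ := Nat.exists_eq_add_one_of_ne_zero (mem_Ioo.1 hj).1.ne'
    simp only [mem_Ioc, Nat.add_sub_cancel, add_mul, one_mul]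
    omega
  have key := card_filter_Ioo_sub_one_add_ite
    (fun j => i * (n + 1) + j * p ∈ Ioc m (m + p * (n + 1))) n
  rw [zero_mul, add_zero] at key
  rw [hshift, Nat.add_sub_cancel, key]

lemma windowCount_le_windowCount_add {p q m : ℕ} (hq : 0 < q) (h : 2 * (m + p) ≤ p * q) :
    windowCount p q m ≤ windowCount p q (m + p) := by
  suffices #{i ∈ Ioo 0 p | i * q + (q - 1) * p ∈ Ioc m (m + p * q)} ≤
      #{i ∈ Ioo 0 p | i * q ∈ Ioc m (m + p * q)} by
    have := windowCount_add_card_filter (p := p) hq m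
    omega
  refine card_le_card_of_injOn (p - ·) (fun i hi => ?_) (fun i hi i' hi' h => ?_)
  · simp only [mem_coe, mem_filter, mem_Ioo, mem_Ioc] at hi ⊢
    have h1 := Nat.sub_mul p i q
    have h2 : i * q ≤ p * q := Nat.mul_le_mul_right q hi.1.2.le
    have h3 := Nat.sub_one_mul q p
    have h4 := Nat.mul_comm q p
    omega
  · simp only [mem_coe, mem_filter, mem_Ioo] at hi hi'
    simp only at h
    omega

lemma exists_windowCount_le_of_two_mul_lt {p q : ℕ} (hp : 0 < p) (hq : 0 < q) {m : ℕ}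
    (hm : 2 * m < p * q) :
    ∃ m', 2 * m' < p * q ∧ p * q ≤ 2 * m' + 2 * p ∧ windowCount p q m ≤ windowCount p q m' := by
  by_cases h : p * q ≤ 2 * m + 2 * p
  · exact ⟨m, hm, h, le_rfl⟩
  · obtain ⟨m', hm'⟩ := exists_windowCount_le_of_two_mul_lt hp hq (m := m + p) (by omega)
    exact ⟨m', hm'.1, hm'.2.1, (windowCount_le_windowCount_add hq (by omega)).trans hm'.2.2⟩
termination_by p * q - 2 * m

lemma exists_windowCount_le {p q : ℕ} (hp : 0 < p) (hq : 0 < q) {m : ℕ} (hm : m < p * q) :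
    ∃ m', 2 * m' < p * q ∧ p * q ≤ 2 * m' + 2 * p ∧ windowCount p q m ≤ windowCount p q m' := by
  by_cases h : 2 * m < p * q
  · exact exists_windowCount_le_of_two_mul_lt hp hq h
  · rw [← windowCount_symm hm]
    exact exists_windowCount_le_of_two_mul_lt hp hq (by omega)

theorem sigmaMax_attained_general (p q : ℕ) (hp : 0 < p) (hpq : p < q) :
    ∃ t : ℚ, 1 / 2 - 1 / (q : ℚ) < t ∧ t ≤ 1 / 2 ∧ sigmaT p q (t : ℝ) = sigmaMax p q := by
  have hq : 0 < q := hp.trans hpq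
  obtain ⟨m₀, hm₀, hmax⟩ := exists_max_image (range (p * q)) (windowCount p q)
    ⟨0, mem_range.2 (Nat.mul_pos hp hq)⟩
  obtain ⟨m, hm_lt, hm_ge, hm₀m⟩ := exists_windowCount_le hp hq (mem_range.1 hm₀)
  have hpqQ : (0 : ℚ) < 2 * (p * q) := by positivity
  have hlt : (2 * m + 1 : ℚ) ≤ p * q := by exact_mod_cast hm_lt
  have hge : (p * q : ℚ) ≤ 2 * m + 2 * p := by exact_mod_cast hm_ge
  have hq' : (0 : ℚ) < q := by exact_mod_cast hq
  refine ⟨(2 * m + 1) / (2 * (p * q)), ?_, ?_, ?_⟩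
  · rw [lt_div_iff₀ hpqQ]
    field_simp
    linarith
  · rw [div_le_iff₀ hpqQ]
    linarith
  · push_cast
    refine (sigmaMax_eq_sigmaT_of_isMaxOn ?_ (isMaxOn_iff.2 fun s hs => ?_)).symm
    · have hlt' : (2 * m + 1 : ℝ) ≤ p * q := by exact_mod_cast hm_lt
      have hpq' : (0 : ℝ) < p * q := by positivity
      exact ⟨by positivity, (div_lt_one (by positivity)).2 (by linarith)⟩
    · obtain ⟨k, hk, hs⟩ := exists_latticeCount_le_windowCount hp hq (Set.Ioo_subset_Ico_self hs)
      rw [latticeCount_midpoint hp hq]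
      exact hs.trans ((hmax k (mem_range.2 hk)).trans hm₀m)

theorem sigmaMax_attained (p q : ℕ) (hp : 0 < p) (hpq : p < q) (hco : Nat.Coprime p q) :
    ∃ t : ℚ, 1 / 2 - 1 / (q : ℚ) < t ∧ t ≤ 1 / 2 ∧ sigmaT p q (t : ℝ) = sigmaMax p q :=
  sigmaMax_attained_general p q hp hpq
end

section
/- Let 0 < p < q be coprime integers. For every rational t with 1/q < t ≤ 1/2, one has σ_{t − 1/q}(p,q) ≤ σ_t(p,q). -/
/-!
Raising `j` by one adds exactly `1/q` to `i/p + j/q`, so it maps the lattice points counted by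
`N_{t - 1/q}` to points counted by `N_t`, except on the top row `j = q - 1`. A point of the top row
counted by `N_{t - 1/q}` has `i/p < t`, and it can be sent to `(p - i, 1)` instead, whose value
`1 - i/p + 1/q` lies in `(t, t + 1)` because `1/q < t ≤ 1/2`. The resulting map is injective
(the two cases are told apart by `j = 1`), hence `N_{t - 1/q} ≤ N_t`.
-/

open Set

def latticeSet (p q : ℕ) (t : ℝ) : Set (ℕ × ℕ) :=
  {ij | 0 < ij.1 ∧ ij.1 < p ∧ 0 < ij.2 ∧ ij.2 < q ∧
    t < (ij.1 : ℝ) / p + (ij.2 : ℝ) / q ∧ (ij.1 : ℝ) / p + (ij.2 : ℝ) / q < t + 1}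

lemma latticeCount_eq_ncard (p q : ℕ) (t : ℝ) :
    latticeCount p q t = (latticeSet p q t).ncard := rfl

lemma latticeSet_finite (p q : ℕ) (t : ℝ) : (latticeSet p q t).Finite :=
  ((finite_Iio p).prod (finite_Iio q)).subset fun _ h => ⟨h.2.1, h.2.2.2.1⟩

def latticeShift (p q : ℕ) (ij : ℕ × ℕ) : ℕ × ℕ :=
  if ij.2 + 1 < q then (ij.1, ij.2 + 1) else (p - ij.1, 1)

section LatticeShift

variable {p q : ℕ} {s : ℝ}

lemma injOn_latticeShift :
    InjOn (latticeShift p q) {ij | ij.1 ≤ p ∧ 0 < ij.2 ∧ ij.2 < q} := by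
  rintro ⟨i, j⟩ ⟨hip, hj0, hjq⟩ ⟨i', j'⟩ ⟨hip', hj0', hjq'⟩ heq
  dsimp only at hip hj0 hjq hip' hj0' hjq'
  simp only [latticeShift] at heq
  split_ifs at heq <;> simp only [Prod.mk.injEq] at heq ⊢ <;> omega

lemma mapsTo_latticeShift (hs0 : 1 / (q : ℝ) < s) (hs1 : s ≤ 1 / 2) :
    MapsTo (latticeShift p q) (latticeSet p q (s - 1 / q)) (latticeSet p q s) := by
  rintro ⟨i, j⟩ ⟨hi0, hip, hj0, hjq, hlo, hhi⟩
  dsimp only at hi0 hip hj0 hjq hlo hhi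
  have hq : (0 : ℝ) < q := by exact_mod_cast hj0.trans hjq
  have hp : (0 : ℝ) < p := by exact_mod_cast hi0.trans hip
  by_cases hc : j + 1 < q
  · have hstep : ((j + 1 : ℕ) : ℝ) / q = j / q + 1 / q := by push_cast; rw [add_div]
    simp only [latticeShift, hc, if_true]
    exact ⟨hi0, hip, j.succ_pos, hc, by rw [hstep]; linarith, by rw [hstep]; linarith⟩
  · have htop : (j : ℝ) / q = 1 - 1 / q := by
      have hj : (j : ℝ) + 1 = q := by exact_mod_cast (show j + 1 = q by omega)
      rw [eq_sub_of_add_eq hj, sub_div, div_self hq.ne']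
    have hrefl : ((p - i : ℕ) : ℝ) / p = 1 - i / p := by
      rw [Nat.cast_sub hip.le, sub_div, div_self hp.ne']
    have hi_lt : (i : ℝ) / p < s := by linarith
    have hi_pos : (0 : ℝ) < i / p := by positivity
    have hq_inv : (0 : ℝ) < 1 / q := by positivity
    simp only [latticeShift, hc, if_false]
    exact ⟨by omega, by omega, one_pos, by omega,
      by push_cast [hrefl]; linarith, by push_cast [hrefl]; linarith⟩

lemma latticeCount_sub_inv_le (hs0 : 1 / (q : ℝ) < s) (hs1 : s ≤ 1 / 2) :
    latticeCount p q (s - 1 / q) ≤ latticeCount p q s := by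
  have hinj : InjOn (latticeShift p q) (latticeSet p q (s - 1 / q)) :=
    injOn_latticeShift.mono fun _ h => mem_ofPred.mpr ⟨h.2.1.le, h.2.2.1, h.2.2.2.1⟩
  rw [latticeCount_eq_ncard, latticeCount_eq_ncard]
  exact ncard_le_ncard_of_injOn _ (mapsTo_latticeShift hs0 hs1) hinj (latticeSet_finite p q s)

end LatticeShift

lemma sigmaT_le_sigmaT_iff {p q : ℕ} {s t : ℝ} :
    sigmaT p q s ≤ sigmaT p q t ↔ latticeCount p q s ≤ latticeCount p q t := by
  simp only [sigmaT, sub_le_sub_iff_right, mul_le_mul_iff_of_pos_left two_pos, Nat.cast_le]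

theorem sigmaT_shift_le_general (p q : ℕ)
    (t : ℚ) (ht0 : 1 / (q : ℚ) < t) (ht1 : t ≤ 1 / 2) :
    sigmaT p q ((t : ℝ) - 1 / (q : ℝ)) ≤ sigmaT p q (t : ℝ) :=
  sigmaT_le_sigmaT_iff.mpr <| latticeCount_sub_inv_le
    (by simpa using (Rat.cast_lt (K := ℝ)).mpr ht0) (by simpa using (Rat.cast_le (K := ℝ)).mpr ht1)

theorem sigmaT_shift_le (p q : ℕ) (hp : 0 < p) (hpq : p < q) (hco : Nat.Coprime p q)
    (t : ℚ) (ht0 : 1 / (q : ℚ) < t) (ht1 : t ≤ 1 / 2) :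
    sigmaT p q ((t : ℝ) - 1 / (q : ℝ)) ≤ sigmaT p q (t : ℝ) :=
  sigmaT_shift_le_general p q t ht0 ht1
end

section
/- Let n ≥ 1 and let a : ℤ → ℤ be a function with period n (a(i+n) = a(i) for all i), taking only the values +1 and −1, and with ∑_{i=0}^{n−1} a(i) = 0 (a balanced sequence). For k ∈ ℤ define M(k) = max_{k ≤ l < k+n} ∑_{i=k}^{l} a(i). Then for every k ∈ ℤ, M(k) = a(k) + M(k+1). -/
/-!
Periodicity and balance make the sum of `a` over every window of `n` consecutive integers
vanish. Hence the partial sums `∑_{i=k}^{l} a i` for `k ≤ l < k + n` are exactly `a k` plus the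
partial sums starting at `k + 1`: the term `l = k` corresponds to the full window `l = k + n`
starting at `k + 1`, and every other term splits off `a k`. Translation by `a k` commutes with
`sSup`.
-/

open Finset Function

theorem Int.sum_Ico_add_eq_sum_range {M : Type*} [AddCommMonoid M] (f : ℤ → M) (m : ℤ)
    (n : ℕ) : ∑ i ∈ Ico m (m + n), f i = ∑ j ∈ Finset.range n, f (m + j) := by
  simp [Int.Ico_eq_finset_map, sum_map]

theorem Function.Periodic.sum_range_add_one_eq {M : Type*} [AddCommMonoid M] {f : ℤ → M}
    {n : ℕ} (hf : Periodic f n) (m : ℤ) :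
    ∑ j ∈ range n, f (m + 1 + j) = ∑ j ∈ range n, f (m + j) := by
  cases n with
  | zero => simp
  | succ n =>
    have hwrap : f (m + 1 + n) = f m := by
      rw [← hf m]; push_cast; ring_nf
    rw [sum_range_succ, sum_range_succ', hwrap]
    simp only [Nat.cast_add, Nat.cast_one, Nat.cast_zero, add_zero, add_comm (1 : ℤ), add_assoc]

theorem Function.Periodic.sum_range_add_eq {M : Type*} [AddCommMonoid M] {f : ℤ → M} {n : ℕ}
    (hf : Periodic f n) (m : ℤ) : ∑ j ∈ range n, f (m + j) = ∑ j ∈ range n, f j := by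
  induction m using Int.induction_on with
  | zero => simp
  | succ m ih => rw [hf.sum_range_add_one_eq, ih]
  | pred m ih => rw [← ih, ← hf.sum_range_add_one_eq, sub_add_cancel]

theorem Function.Periodic.sum_Ico_add_eq {M : Type*} [AddCommMonoid M] {f : ℤ → M} {n : ℕ}
    (hf : Periodic f n) (m : ℤ) : ∑ i ∈ Ico m (m + n), f i = ∑ j ∈ range n, f j := by
  rw [Int.sum_Ico_add_eq_sum_range, hf.sum_range_add_eq]

section CyclicPartialSums

variable {M : Type*} [AddCommMonoid M] (a : ℤ → M) (n : ℕ)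

/-- In the paper's notation, `M(k) = sSup (cyclicPartialSums a n k)`. -/
def cyclicPartialSums (k : ℤ) : Set M :=
  {s | ∃ l : ℤ, k ≤ l ∧ l < k + n ∧ s = ∑ i ∈ Icc k l, a i}

theorem cyclicPartialSums_eq_image (k : ℤ) :
    cyclicPartialSums a n k = (fun l => ∑ i ∈ Icc k l, a i) '' Set.Ico k (k + n) := by
  ext s
  simp only [cyclicPartialSums, Set.mem_ofPred_eq, Set.mem_image, Set.mem_Ico, and_assoc,
    eq_comm (a := s)]

theorem cyclicPartialSums_finite (k : ℤ) : (cyclicPartialSums a n k).Finite := by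
  rw [cyclicPartialSums_eq_image]
  exact (Set.finite_Ico _ _).image _

theorem cyclicPartialSums_nonempty (hn : n ≠ 0) (k : ℤ) :
    (cyclicPartialSums a n k).Nonempty :=
  ⟨_, k, le_rfl, by omega, rfl⟩

theorem sum_Icc_eq_add_sum_Icc_add_one {k l : ℤ} (h : k ≤ l) :
    ∑ i ∈ Icc k l, a i = a k + ∑ i ∈ Icc (k + 1) l, a i := by
  rw [Icc_add_one_left_eq_Ioc, add_sum_Ioc_eq_sum_Icc h]

theorem cyclicPartialSums_eq_image_add {k : ℤ} (hwin : ∑ i ∈ Icc (k + 1) (k + n), a i = 0) :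
    cyclicPartialSums a n k = (a k + ·) '' cyclicPartialSums a n (k + 1) := by
  ext s
  constructor
  · rintro ⟨l, hkl, hln, rfl⟩
    rw [sum_Icc_eq_add_sum_Icc_add_one a hkl]
    rcases hkl.eq_or_lt with rfl | hlt
    · refine ⟨_, ⟨k + n, by omega, by omega, rfl⟩, ?_⟩
      rw [hwin, Icc_eq_empty (by omega), sum_empty]
    · exact ⟨_, ⟨l, by omega, by omega, rfl⟩, rfl⟩
  · rintro ⟨_, ⟨l, hkl, hln, rfl⟩, rfl⟩
    rcases (show l < k + n ∨ l = k + n by omega) with hlt | rfl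
    · exact ⟨l, by omega, hlt, (sum_Icc_eq_add_sum_Icc_add_one a (by omega)).symm⟩
    · refine ⟨k, le_rfl, by omega, ?_⟩
      rw [hwin, sum_Icc_eq_add_sum_Icc_add_one a le_rfl, Icc_eq_empty (by omega), sum_empty]

end CyclicPartialSums

theorem balanced_cyclic_max_general (n : ℕ) (hn : 1 ≤ n) (a : ℤ → ℤ)
    (hper : ∀ i : ℤ, a (i + n) = a i)
    (hbal : ∑ i ∈ Finset.range n, a (i : ℤ) = 0) :
    ∀ k : ℤ,
      sSup {s : ℤ | ∃ l : ℤ, k ≤ l ∧ l < k + n ∧ s = ∑ i ∈ Finset.Icc k l, a i} =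
        a k +
          sSup {s : ℤ | ∃ l : ℤ, k + 1 ≤ l ∧ l < k + 1 + n ∧
            s = ∑ i ∈ Finset.Icc (k + 1) l, a i} := by
  intro k
  have hwin : ∑ i ∈ Icc (k + 1) (k + n), a i = 0 := by
    rw [← Ico_add_one_right_eq_Icc, add_right_comm, Periodic.sum_Ico_add_eq hper, hbal]
  change sSup (cyclicPartialSums a n k) = a k + sSup (cyclicPartialSums a n (k + 1))
  rw [cyclicPartialSums_eq_image_add a n hwin]
  exact ((OrderIso.addLeft (a k)).map_csSup' (cyclicPartialSums_nonempty a n (by omega) _)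
    (cyclicPartialSums_finite a n _).bddAbove).symm

theorem balanced_cyclic_max (n : ℕ) (hn : 1 ≤ n) (a : ℤ → ℤ)
    (hper : ∀ i : ℤ, a (i + n) = a i)
    (hval : ∀ i : ℤ, a i = 1 ∨ a i = -1)
    (hbal : ∑ i ∈ Finset.range n, a (i : ℤ) = 0) :
    ∀ k : ℤ,
      sSup {s : ℤ | ∃ l : ℤ, k ≤ l ∧ l < k + n ∧ s = ∑ i ∈ Finset.Icc k l, a i} =
        a k +
          sSup {s : ℤ | ∃ l : ℤ, k + 1 ≤ l ∧ l < k + 1 + n ∧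
            s = ∑ i ∈ Finset.Icc (k + 1) l, a i} :=
  balanced_cyclic_max_general n hn a hper hbal
end

section
/- Let 0 < p < q be coprime integers. Then σ̂(p,q) ≤ σ(p,q) + p − 1. -/
open Finset

lemma Int.ediv_add_sub_ediv_le_add_one {p : ℤ} (hp : 0 < p) (x y c : ℤ) :
    (x + c) / p - x / p ≤ (y + c) / p - y / p + 1 := by
  suffices p * ((x + c) / p - x / p) < p * ((y + c) / p - y / p + 2) by
    have := lt_of_mul_lt_mul_left this hp.le
    omega
  have := Int.mul_ediv_add_emod (x + c) p
  have := Int.mul_ediv_add_emod x p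
  have := Int.mul_ediv_add_emod (y + c) p
  have := Int.mul_ediv_add_emod y p
  have := Int.emod_nonneg (x + c) hp.ne'
  have := Int.emod_lt_of_pos x hp
  have := Int.emod_lt_of_pos (y + c) hp
  have := Int.emod_nonneg y hp.ne'
  rw [mul_sub, mul_add, mul_sub]
  linarith

lemma Nat.Coprime.two_mul_ne_three_mul {p q i j : ℕ} (hco : p.Coprime q) (hi : 0 < i)
    (hip : i < p) (hj : 0 < j) (hjq : j < q) : 2 * (i * q + j * p) ≠ 3 * (p * q) := by
  intro h
  have hpi : p ∣ 2 * i := hco.dvd_of_dvd_mul_right <|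
    (Nat.dvd_add_left (Dvd.intro (2 * j) rfl)).1 ⟨3 * q, by linarith⟩
  have hqj : q ∣ 2 * j := hco.symm.dvd_of_dvd_mul_right <|
    (Nat.dvd_add_right (Dvd.intro (2 * i) rfl)).1 ⟨3 * p, by linarith⟩
  have hp2 := Nat.eq_of_dvd_of_lt_two_mul (by omega) hpi (by omega)
  have hq2 := Nat.eq_of_dvd_of_lt_two_mul (by omega) hqj (by omega)
  have := hco.gcd_eq_one
  rw [← hp2, ← hq2, Nat.gcd_mul_left] at this
  omega

def multiplesIn (p q : ℕ) (x y : ℤ) : Finset ℕ :=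
  {j ∈ Ioo 0 q | x < j * p ∧ j * p ≤ y}

section multiplesIn

variable {p q : ℕ}

lemma card_multiplesIn_le (hp : 0 < p) (x y : ℤ) :
    #(multiplesIn p q x y) ≤ (y / p - x / p).toNat := by
  have hp' : (0 : ℤ) < p := by exact_mod_cast hp
  rw [← Int.card_Ioc]
  refine card_le_card_of_injOn (fun j : ℕ ↦ (j : ℤ)) (fun j hj ↦ ?_)
    Nat.cast_injective.injOn
  simp only [multiplesIn, coe_filter, Set.mem_ofPred_eq] at hj
  rw [mem_coe, mem_Ioc, Int.ediv_lt_iff_lt_mul hp', Int.le_ediv_iff_mul_le hp']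
  exact hj.2

lemma le_card_multiplesIn (hp : 0 < p) {x y : ℤ} (hx : 0 ≤ x) (hy : y < q * p) :
    (y / p - x / p).toNat ≤ #(multiplesIn p q x y) := by
  have hp' : (0 : ℤ) < p := by exact_mod_cast hp
  have hx' : 0 ≤ x / p := Int.ediv_nonneg hx hp'.le
  have hy' : y / p < q := (Int.ediv_lt_iff_lt_mul hp').2 hy
  rw [← Int.card_Ioc]
  refine card_le_card_of_injOn Int.toNat (fun k hk ↦ ?_) (fun k hk l hl hkl ↦ ?_)
  · rw [mem_coe, mem_Ioc] at hk
    have hk' : ((k.toNat : ℕ) : ℤ) = k := Int.toNat_of_nonneg (by omega)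
    simp only [multiplesIn, coe_filter, mem_Ioo, Set.mem_ofPred_eq, hk']
    rw [← Int.ediv_lt_iff_lt_mul hp', ← Int.le_ediv_iff_mul_le hp']
    omega
  · rw [mem_coe, mem_Ioc] at hk hl
    omega

lemma card_multiplesIn_le_add_one (hp : 0 < p) {x y c : ℤ} (hy : 0 ≤ y)
    (hyc : y + c < q * p) :
    #(multiplesIn p q x (x + c)) ≤ #(multiplesIn p q y (y + c)) + 1 := by
  have := card_multiplesIn_le (q := q) hp x (x + c)
  have := le_card_multiplesIn hp hy hyc
  have := Int.ediv_add_sub_ediv_le_add_one (by exact_mod_cast hp : (0 : ℤ) < p) x y c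
  omega

lemma multiplesIn_eq_empty (hp : 0 < p) {x y : ℤ} (hy : y ≤ 0) : multiplesIn p q x y = ∅ := by
  refine filter_false_of_mem fun j hj ⟨_, hjy⟩ ↦ ?_
  have : (0 : ℤ) < j * p := by
    have := (mem_Ioo.1 hj).1
    positivity
  omega

end multiplesIn

lemma card_filter_two_mul_lt_le (p : ℕ) : #{i ∈ Ioo 0 p | 2 * i < p} ≤ (p - 1) / 2 := by
  calc #{i ∈ Ioo 0 p | 2 * i < p} ≤ #(Icc 1 ((p - 1) / 2)) :=
        card_le_card fun i hi ↦ by simp only [mem_filter, mem_Ioo, mem_Icc] at hi ⊢; omega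
    _ = (p - 1) / 2 := by simp

def windowPairs (p q : ℕ) (a b : ℤ) : Finset (ℕ × ℕ) :=
  {x ∈ Ioo 0 p ×ˢ Ioo 0 q | a < x.1 * q + x.2 * p ∧ x.1 * q + x.2 * p ≤ b}

section windowPairs

variable {p q : ℕ}

lemma card_windowPairs_eq_sum (a b : ℤ) :
    #(windowPairs p q a b) = ∑ i ∈ Ioo 0 p, #(multiplesIn p q (a - i * q) (b - i * q)) := by
  rw [windowPairs, card_filter, sum_product]
  simp only [multiplesIn, card_filter, sub_lt_iff_lt_add', le_sub_iff_add_le']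

lemma card_windowPairs_add {a b c : ℤ} (hab : a ≤ b) (hbc : b ≤ c) :
    #(windowPairs p q a c) = #(windowPairs p q a b) + #(windowPairs p q b c) := by
  simp only [windowPairs]
  rw [← card_union_of_disjoint (disjoint_filter.2 fun _ _ h₁ h₂ ↦ by omega), ← filter_or]
  exact congrArg card (filter_congr fun _ _ ↦ by omega)

lemma reflect_mem_windowPairs {a b : ℤ} {x : ℕ × ℕ} (hx : x ∈ windowPairs p q a b) :
    (p - x.1, q - x.2) ∈ windowPairs p q (2 * p * q - b - 1) (2 * p * q - a - 1) := by
  obtain ⟨hx, hlo, hhi⟩ := mem_filter.1 hx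
  simp only [mem_product, mem_Ioo] at hx
  have hL : ((p - x.1 : ℕ) : ℤ) * q + ((q - x.2 : ℕ) : ℤ) * p
      = 2 * p * q - (x.1 * q + x.2 * p) := by
    push_cast [Nat.cast_sub hx.1.2.le, Nat.cast_sub hx.2.2.le]
    ring
  simp only [windowPairs, mem_filter, mem_product, mem_Ioo, hL]
  exact ⟨⟨⟨by omega, by omega⟩, by omega, by omega⟩, by omega, by omega⟩

lemma card_windowPairs_reflect (a b : ℤ) :
    #(windowPairs p q a b) = #(windowPairs p q (2 * p * q - b - 1) (2 * p * q - a - 1)) := by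
  have hinv {a b : ℤ} (x : ℕ × ℕ) (hx : x ∈ windowPairs p q a b) :
      (p - (p - x.1), q - (q - x.2)) = x := by
    simp only [windowPairs, mem_filter, mem_product, mem_Ioo] at hx
    ext <;> simp only <;> omega
  refine card_nbij' (fun x ↦ (p - x.1, q - x.2)) (fun x ↦ (p - x.1, q - x.2))
    (fun x hx ↦ reflect_mem_windowPairs hx) (fun x hx ↦ ?_) (fun x hx ↦ hinv x hx)
    (fun x hx ↦ hinv x hx)
  have := reflect_mem_windowPairs hx
  rwa [show 2 * p * q - (2 * p * q - a - 1) - 1 = a by ring,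
    show 2 * p * q - (2 * p * q - b - 1) - 1 = b by ring] at this

lemma card_multiplesIn_row_le (hp : 0 < p) (hq : 0 < q) {n m : ℤ} (hn : 0 ≤ n)
    (hm : 2 * m ≤ p * q) (i : ℕ) :
    #(multiplesIn p q (n - i * q) (m - i * q))
      ≤ #(multiplesIn p q (p * q - m - 1 - i * q) (p * q - n - 1 - i * q))
        + if 2 * i < p then 1 else 0 := by
  have hiq : (0 : ℤ) ≤ i * q := by positivity
  split_ifs with h
  · -- left of the middle the mirrored interval is not cut off by `0 < j`
    have h' : ((2 * i + 1 : ℕ) : ℤ) * q ≤ p * q := by gcongr; exact_mod_cast h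
    have h'' : 2 * (i * q : ℤ) + q ≤ p * q := by push_cast at h'; linarith
    have := card_multiplesIn_le_add_one (q := q) hp (x := n - i * q) (y := p * q - m - 1 - i * q)
      (c := m - n) (by omega) (by linarith)
    rwa [show n - i * q + (m - n) = m - i * q by ring,
      show p * q - m - 1 - i * q + (m - n) = p * q - n - 1 - i * q by ring] at this
  · have h' : (p : ℤ) * q ≤ (2 * i : ℕ) * q := by gcongr; omega
    push_cast at h'
    rw [multiplesIn_eq_empty hp (by linarith), card_empty]
    omega

lemma card_windowPairs_le_mirror (hp : 0 < p) (hq : 0 < q) {n m : ℤ} (hn : 0 ≤ n)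
    (hm : 2 * m ≤ p * q) :
    #(windowPairs p q n m)
      ≤ #(windowPairs p q (p * q - m - 1) (p * q - n - 1)) + (p - 1) / 2 :=
  calc #(windowPairs p q n m)
      _ = ∑ i ∈ Ioo 0 p, #(multiplesIn p q (n - i * q) (m - i * q)) :=
        card_windowPairs_eq_sum n m
      _ ≤ ∑ i ∈ Ioo 0 p, (#(multiplesIn p q (p * q - m - 1 - i * q) (p * q - n - 1 - i * q))
          + if 2 * i < p then 1 else 0) :=
        sum_le_sum fun i _ ↦ card_multiplesIn_row_le hp hq hn hm i
      _ = #(windowPairs p q (p * q - m - 1) (p * q - n - 1)) + #{i ∈ Ioo 0 p | 2 * i < p} := by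
        rw [sum_add_distrib, card_windowPairs_eq_sum, card_filter]
      _ ≤ _ := by gcongr; exact card_filter_two_mul_lt_le p

lemma card_windowPairs_le_of_le (hp : 0 < p) (hq : 0 < q) {n m : ℤ} (hn : 0 ≤ n) (hnm : n ≤ m)
    (hm : 2 * m ≤ p * q) :
    #(windowPairs p q n (n + p * q)) ≤ #(windowPairs p q m (m + p * q)) + (p - 1) / 2 := by
  have hpq : (0 : ℤ) ≤ p * q := by positivity
  rw [card_windowPairs_add (b := m) hnm (by linarith),
    card_windowPairs_add (a := m) (b := n + p * q) (c := m + p * q) (by linarith) (by linarith),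
    card_windowPairs_reflect (n + p * q),
    show 2 * p * q - (m + p * q) - 1 = p * q - m - 1 by ring,
    show 2 * p * q - (n + p * q) - 1 = p * q - n - 1 by ring]
  have := card_windowPairs_le_mirror hp hq hn hm
  omega

lemma card_windowPairs_le_middle (hp : 0 < p) (hq : 0 < q) {n : ℤ} (hn : 0 ≤ n)
    (hnpq : n < p * q) :
    #(windowPairs p q n (n + p * q))
      ≤ #(windowPairs p q (p * q / 2) (p * q / 2 + p * q)) + (p - 1) / 2 := by
  rcases le_or_gt n (p * q / 2) with h | h
  · exact card_windowPairs_le_of_le hp hq hn h (by omega)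
  · rw [card_windowPairs_reflect, show 2 * p * q - (n + p * q) - 1 = p * q - n - 1 by ring,
      show 2 * p * q - n - 1 = p * q - n - 1 + p * q by ring]
    exact card_windowPairs_le_of_le hp hq (by omega) (by omega) (by omega)

end windowPairs

lemma latticeCount_eq_card_s6 (p q : ℕ) (t : ℝ) :
    latticeCount p q t = #{x ∈ Ioo 0 p ×ˢ Ioo 0 q |
      t < (x.1 : ℝ) / p + (x.2 : ℝ) / q ∧ (x.1 : ℝ) / p + (x.2 : ℝ) / q < t + 1} := by
  rw [latticeCount, ← Set.ncard_coe_finset]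
  congr 1
  ext x
  simp [and_assoc]

lemma div_add_div_eq_mul_add_mul_div {p q : ℕ} (hp : 0 < p) (hq : 0 < q) (i j : ℕ) :
    (i : ℝ) / p + j / q = ((i * q + j * p : ℤ) : ℝ) / (p * q) := by
  push_cast
  field_simp

lemma latticeCount_le_card_windowPairs {p q : ℕ} (hp : 0 < p) (hq : 0 < q) (t : ℝ) :
    latticeCount p q t ≤ #(windowPairs p q ⌊t * (p * q)⌋ (⌊t * (p * q)⌋ + p * q)) := by
  have hpq : (0 : ℝ) < p * q := by positivity
  rw [latticeCount_eq_card_s6]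
  refine card_le_card fun x hx ↦ ?_
  obtain ⟨hx, hlo, hhi⟩ := mem_filter.1 hx
  rw [div_add_div_eq_mul_add_mul_div hp hq, lt_div_iff₀ hpq] at hlo
  rw [div_add_div_eq_mul_add_mul_div hp hq, div_lt_iff₀ hpq] at hhi
  have hhi' : ((x.1 * q + x.2 * p - p * q : ℤ) : ℝ) ≤ t * (p * q) := by
    push_cast at hhi ⊢
    linarith
  exact mem_filter.2 ⟨hx, Int.floor_lt.2 hlo, by linarith [Int.le_floor.2 hhi']⟩

lemma card_windowPairs_middle_le_latticeCount {p q : ℕ} (hp : 0 < p) (hq : 0 < q)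
    (hco : p.Coprime q) :
    #(windowPairs p q (p * q / 2) (p * q / 2 + p * q)) ≤ latticeCount p q (1 / 2) := by
  have hpq : (0 : ℝ) < p * q := by positivity
  rw [latticeCount_eq_card_s6]
  refine card_le_card fun x hx ↦ ?_
  obtain ⟨hx, hlo, hhi⟩ := mem_filter.1 hx
  obtain ⟨⟨hi, hip⟩, hj, hjq⟩ : (0 < x.1 ∧ x.1 < p) ∧ 0 < x.2 ∧ x.2 < q := by
    simpa only [mem_product, mem_Ioo] using hx
  have hne : 2 * ((x.1 * q + x.2 * p : ℕ) : ℤ) ≠ 3 * (p * q : ℕ) := by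
    exact_mod_cast hco.two_mul_ne_three_mul hi hip hj hjq
  push_cast at hne
  have hlo' : ((p * q : ℤ) : ℝ) < 2 * ((x.1 * q + x.2 * p : ℤ) : ℝ) := by
    exact_mod_cast (by omega)
  have hhi' : 2 * ((x.1 * q + x.2 * p : ℤ) : ℝ) < 3 * ((p * q : ℤ) : ℝ) := by
    exact_mod_cast (by omega)
  refine mem_filter.2 ⟨hx, ?_, ?_⟩
  · rw [div_add_div_eq_mul_add_mul_div hp hq, lt_div_iff₀ hpq]
    push_cast at hlo' ⊢
    linarith
  · rw [div_add_div_eq_mul_add_mul_div hp hq, div_lt_iff₀ hpq]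
    push_cast at hhi' ⊢
    linarith

theorem sigmaMax_le (p q : ℕ) (hp : 0 < p) (hpq : p < q) (hco : Nat.Coprime p q) :
    sigmaMax p q ≤ sigmaClassical p q + p - 1 := by
  have hq : 0 < q := hp.trans hpq
  refine csSup_le
    ⟨_, Set.mem_image_of_mem _ (show (1 / 2 : ℝ) ∈ Set.Ioo 0 1 by norm_num)⟩ ?_
  rintro _ ⟨t, ⟨ht0, ht1⟩, rfl⟩
  have hn0 : 0 ≤ ⌊t * (p * q)⌋ := Int.floor_nonneg.2 (by positivity)
  have hn1 : ⌊t * (p * q)⌋ < p * q :=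
    Int.floor_lt.2 (by push_cast; nlinarith [show (0 : ℝ) < p * q by positivity])
  have h₁ := latticeCount_le_card_windowPairs hp hq t
  have h₂ := card_windowPairs_le_middle hp hq hn0 hn1
  have h₃ := card_windowPairs_middle_le_latticeCount hp hq hco
  simp only [sigmaClassical, sigmaT]
  omega
end

section
/- Let 0 < p < q be coprime integers with p even. Then σ̂(p,q) ≤ σ(p,q) + p − 2. -/
/-!
Write `x = i/p + j/q`, so `N_t` counts the points of the box `0 < i < p`, `0 < j < q` with
`t < x < t + 1`. The involution `(i, j) ↦ (p - i, q - j)` sends `x` to `2 - x`, so `N_{1-t} = N_t`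
and we may assume `t ≤ 1/2`. As `p = 2P` is coprime to `q`, no point has `x = 1/2`; hence
`N_t - N_{1/2} = #{t < x < 1/2} - #{t + 1 ≤ x < 3/2}`, and after reflecting the last set the bound
`N_t ≤ N_{1/2} + P - 1` compares the points whose weight `w = i q + j p = p q x` lies among the
`n` integers just below `P q` with those among the `n` integers just above it. For fixed `i` the
weights form an arithmetic progression of step `p`: below `P q` only the `P - 1` columns `i < P`
occur, each with at most `⌊n/p⌋ + 1` points, while above it each column `i ≤ P` has at least
`⌊n/p⌋` points.
-/

open Finset

theorem card_filter_product {α β : Type*} (s : Finset α) (t : Finset β) (P : α × β → Prop)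
    [DecidablePred P] :
    #{x ∈ s ×ˢ t | P x} = ∑ a ∈ s, #{b ∈ t | P (a, b)} := by
  simp only [card_filter, sum_product]

theorem card_filter_add_mul_mem_Ico_le {p : ℕ} (hp : 0 < p) (s : Finset ℕ) (a b n : ℕ) :
    #{j ∈ s | a + j * p ∈ Ico b (b + n)} ≤ n / p + 1 := by
  set S := {j ∈ s | a + j * p ∈ Ico b (b + n)}
  rcases S.eq_empty_or_nonempty with hS | hS
  · simp [hS]
  have hmin := mem_filter.mp (S.min'_mem hS)
  calc #S ≤ #(Icc (S.min' hS) (S.min' hS + n / p)) := by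
        refine card_le_card fun j hj ↦ mem_Icc.mpr ⟨S.min'_le j hj, ?_⟩
        have hj' := mem_filter.mp hj
        have : (j - S.min' hS) * p < n := by
          rw [Nat.sub_mul]; simp only [mem_Ico] at hmin hj'; omega
        have := (Nat.le_div_iff_mul_le hp).mpr this.le
        omega
    _ = n / p + 1 := by rw [Nat.card_Icc, add_assoc, Nat.add_sub_cancel_left]

theorem le_card_filter_add_mul_mem_Ico {p : ℕ} (hp : 0 < p) {a b n q : ℕ} (hab : a < b)
    (hbq : b + n ≤ a + q * p) :
    n / p ≤ #{j ∈ Ioo 0 q | a + j * p ∈ Ico b (b + n)} := by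
  set c := (b - 1 - a) / p
  calc n / p = #(Icc (c + 1) (c + n / p)) := by simp
    _ ≤ _ := by
        refine card_le_card fun j hj ↦ ?_
        obtain ⟨hj1, hj2⟩ := mem_Icc.mp hj
        have hc₁ : c * p ≤ b - 1 - a := Nat.div_mul_le_self _ _
        have hc₂ : b - 1 - a < c * p + p := Nat.lt_div_mul_add hp
        have h₁ : c * p + p ≤ j * p := by simpa [Nat.add_mul] using Nat.mul_le_mul_right p hj1
        have h₂ : j * p ≤ c * p + n / p * p := by
          simpa [Nat.add_mul] using Nat.mul_le_mul_right p hj2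
        have h₃ : n / p * p ≤ n := Nat.div_mul_le_self _ _
        clear_value c
        have hjq : j < q := by
          by_contra! h
          have := Nat.mul_le_mul_right p h
          omega
        simp only [mem_filter, mem_Ioo, mem_Ico]
        omega

theorem card_weight_below_le_card_weight_above {P q : ℕ} (hP : 0 < P) (hq : 0 < q) {n : ℕ}
    (hn : n ≤ P * q) :
    #{ij ∈ Ioo 0 (2 * P) ×ˢ Ioo 0 q | ij.1 * q + ij.2 * (2 * P) ∈ Ico (P * q - n) (P * q)} ≤
      #{ij ∈ Ioo 0 (2 * P) ×ˢ Ioo 0 q |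
        ij.1 * q + ij.2 * (2 * P) ∈ Ico (P * q + 1) (P * q + 1 + n)} + (P - 1) := by
  rw [card_filter_product, card_filter_product]
  set L := fun i ↦ #{j ∈ Ioo 0 q | i * q + j * (2 * P) ∈ Ico (P * q - n) (P * q)}
  set R := fun i ↦ #{j ∈ Ioo 0 q | i * q + j * (2 * P) ∈ Ico (P * q + 1) (P * q + 1 + n)}
  have hp : 0 < 2 * P := by omega
  have hL : ∀ i ∈ Ioo 0 P, L i ≤ n / (2 * P) + 1 := fun i _ ↦ by
    simpa [L, Nat.sub_add_cancel hn] using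
      card_filter_add_mul_mem_Ico_le hp (Ioo 0 q) (i * q) (P * q - n) n
  have hL_zero : ∀ i ∈ Ioo 0 (2 * P), i ∉ Ioo 0 P → L i = 0 := by
    intro i hi hiP
    refine card_eq_zero.mpr (filter_eq_empty_iff.mpr fun j _ hj ↦ ?_)
    have : P * q ≤ i * q := Nat.mul_le_mul_right q (by simp only [mem_Ioo] at hi hiP; omega)
    simp only [mem_Ico] at hj
    omega
  have hR : ∀ i ∈ Icc 1 P, n / (2 * P) ≤ R i := fun i hi ↦ by
    have : i * q ≤ P * q := Nat.mul_le_mul_right q (mem_Icc.mp hi).2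
    have : q ≤ i * q := Nat.le_mul_of_pos_left q (mem_Icc.mp hi).1
    exact le_card_filter_add_mul_mem_Ico hp (by omega) (by linarith)
  calc ∑ i ∈ Ioo 0 (2 * P), L i = ∑ i ∈ Ioo 0 P, L i :=
        (sum_subset (Ioo_subset_Ioo_right (by omega)) hL_zero).symm
    _ ≤ ∑ _i ∈ Ioo 0 P, (n / (2 * P) + 1) := sum_le_sum hL
    _ = (P - 1) * (n / (2 * P)) + (P - 1) := by simp [mul_add_one]
    _ ≤ ∑ _i ∈ Icc 1 P, n / (2 * P) + (P - 1) := by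
        simp only [sum_const, Nat.card_Icc, smul_eq_mul]
        gcongr; omega
    _ ≤ ∑ i ∈ Icc 1 P, R i + (P - 1) := by gcongr with i hi; exact hR i hi
    _ ≤ ∑ i ∈ Ioo 0 (2 * P), R i + (P - 1) := by
        gcongr
        exact fun i hi ↦ by simp only [mem_Icc, mem_Ioo] at hi ⊢; omega

open Classical in
noncomputable def boxPoints (p q : ℕ) (I : Set ℝ) : Finset (ℕ × ℕ) :=
  {ij ∈ Ioo 0 p ×ˢ Ioo 0 q | (ij.1 : ℝ) / p + (ij.2 : ℝ) / q ∈ I}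

section boxPoints

variable {p q : ℕ}

@[simp]
theorem mem_boxPoints {I : Set ℝ} {ij : ℕ × ℕ} :
    ij ∈ boxPoints p q I ↔
      ij.1 ∈ Ioo 0 p ∧ ij.2 ∈ Ioo 0 q ∧ (ij.1 : ℝ) / p + (ij.2 : ℝ) / q ∈ I := by
  simp [boxPoints, and_assoc]

theorem boxPoints_mono {I J : Set ℝ} (h : I ⊆ J) : boxPoints p q I ⊆ boxPoints p q J :=
  fun _ hij ↦ by simp only [mem_boxPoints] at hij ⊢; exact ⟨hij.1, hij.2.1, h hij.2.2⟩

theorem boxPoints_union (I J : Set ℝ) :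
    boxPoints p q (I ∪ J) = boxPoints p q I ∪ boxPoints p q J := by
  ext; simp only [mem_boxPoints, Set.mem_union, Finset.mem_union]; tauto

theorem disjoint_boxPoints {I J : Set ℝ} (h : Disjoint I J) :
    Disjoint (boxPoints p q I) (boxPoints p q J) :=
  disjoint_left.mpr fun _ hI hJ ↦ (mem_boxPoints.mp hI).2.2 |> h.notMem_of_mem_left <|
    (mem_boxPoints.mp hJ).2.2

theorem latticeCount_eq_card_boxPoints (t : ℝ) :
    latticeCount p q t = #(boxPoints p q (Set.Ioo t (t + 1))) := by
  rw [latticeCount, ← Set.ncard_coe_finset]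
  congr 1
  ext ⟨i, j⟩
  simp [and_assoc]

theorem card_boxPoints_preimage_two_sub (I : Set ℝ) :
    #(boxPoints p q ((2 - ·) ⁻¹' I)) = #(boxPoints p q I) := by
  have reflect : ∀ {I : Set ℝ} {ij : ℕ × ℕ}, ij ∈ boxPoints p q ((2 - ·) ⁻¹' I) →
      (p - ij.1, q - ij.2) ∈ boxPoints p q I := by
    rintro I ⟨i, j⟩ hij
    simp only [mem_boxPoints, mem_Ioo, Set.mem_preimage] at hij ⊢
    obtain ⟨⟨hi, hip⟩, ⟨hj, hjq⟩, hx⟩ := hij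
    refine ⟨by omega, by omega, ?_⟩
    have hp : (p : ℝ) ≠ 0 := by norm_cast; omega
    have hq : (q : ℝ) ≠ 0 := by norm_cast; omega
    convert hx using 1
    rw [Nat.cast_sub hip.le, Nat.cast_sub hjq.le]
    field_simp
    ring
  refine card_nbij' (fun ij ↦ (p - ij.1, q - ij.2)) (fun ij ↦ (p - ij.1, q - ij.2))
    (fun _ ↦ reflect) (fun _ h ↦ reflect (by simpa [Set.preimage_preimage] using h)) ?_ ?_ <;>
  · rintro ⟨i, j⟩ hij
    simp only [mem_coe, mem_boxPoints, mem_Ioo] at hij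
    simp only [Prod.mk.injEq]
    omega

theorem latticeCount_one_sub (t : ℝ) : latticeCount p q (1 - t) = latticeCount p q t := by
  rw [latticeCount_eq_card_boxPoints, latticeCount_eq_card_boxPoints,
    ← card_boxPoints_preimage_two_sub, Set.preimage_const_sub_Ioo]
  ring_nf

theorem natCast_div_add_natCast_div {i j : ℕ} (hp : p ≠ 0) (hq : q ≠ 0) :
    (i : ℝ) / p + (j : ℝ) / q = ((i * q + j * p : ℕ) : ℝ) / ((p * q : ℕ) : ℝ) := by
  rw [div_add_div _ _ (by exact_mod_cast hp) (by exact_mod_cast hq)]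
  push_cast
  ring

end boxPoints

theorem boxPoints_half_eq_empty {P q : ℕ} (hco : (2 * P).Coprime q) :
    boxPoints (2 * P) q {1 / 2} = ∅ := by
  refine eq_empty_of_forall_notMem fun ⟨i, j⟩ hij ↦ ?_
  simp only [mem_boxPoints, mem_Ioo, Set.mem_singleton_iff] at hij
  obtain ⟨⟨hi, hip⟩, ⟨hj, hjq⟩, hx⟩ := hij
  have hD : ((2 * P * q : ℕ) : ℝ) ≠ 0 := by norm_cast; exact mul_ne_zero (by omega) (by omega)
  rw [natCast_div_add_natCast_div (by omega) (by omega), div_eq_iff hD] at hx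
  have hw : i * q + j * (2 * P) = P * q := by
    have : ((i * q + j * (2 * P) : ℕ) : ℝ) = ((P * q : ℕ) : ℝ) := by
      rw [hx]; push_cast; ring
    exact_mod_cast this
  have hqj : q ∣ j := hco.symm.dvd_of_dvd_mul_right <| Dvd.intro_left (P - i) <| by
    rw [Nat.sub_mul]; omega
  exact absurd (Nat.le_of_dvd hj hqj) (by omega)

theorem card_boxPoints_Ioo_half_le {P q : ℕ} (hP : 0 < P) (hq : 0 < q) (t : ℝ) :
    #(boxPoints (2 * P) q (Set.Ioo t (1 / 2))) ≤
      #(boxPoints (2 * P) q (Set.Ioc (1 / 2) (1 - t))) + (P - 1) := by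
  have hD : ((2 * P * q : ℕ) : ℝ) = 2 * ((P * q : ℕ) : ℝ) := by push_cast; ring
  have hD₀ : (0 : ℝ) < ((2 * P * q : ℕ) : ℝ) := by positivity
  obtain ⟨a, ha⟩ : ∃ a : ℕ, a = ⌊t * ((2 * P * q : ℕ) : ℝ)⌋₊ := ⟨_, rfl⟩
  have ha_lt : ∀ w : ℕ, w ≠ 0 → t * ((2 * P * q : ℕ) : ℝ) < w → a < w :=
    fun _ hw h ↦ ha ▸ (Nat.floor_lt' hw).mpr h
  have ha_succ : t * ((2 * P * q : ℕ) : ℝ) < a + 1 := ha ▸ Nat.lt_floor_add_one _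
  calc _ ≤ #{ij ∈ Ioo 0 (2 * P) ×ˢ Ioo 0 q |
          ij.1 * q + ij.2 * (2 * P) ∈ Ico (P * q - (P * q - (a + 1))) (P * q)} := by
        refine card_le_card fun ⟨i, j⟩ hij ↦ ?_
        simp only [mem_boxPoints, mem_Ioo, Set.mem_Ioo] at hij
        obtain ⟨⟨hi, hip⟩, ⟨hj, hjq⟩, hx₁, hx₂⟩ := hij
        rw [natCast_div_add_natCast_div (by omega) (by omega)] at hx₁ hx₂
        rw [lt_div_iff₀ hD₀] at hx₁
        rw [div_lt_iff₀ hD₀, hD] at hx₂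
        have hw₁ : a < i * q + j * (2 * P) := ha_lt _ (by positivity) hx₁
        have hw₂ : i * q + j * (2 * P) < P * q := by
          exact_mod_cast (by linarith : ((i * q + j * (2 * P) : ℕ) : ℝ) < ((P * q : ℕ) : ℝ))
        simp only [mem_filter, mem_product, mem_Ioo, mem_Ico]
        omega
    _ ≤ #{ij ∈ Ioo 0 (2 * P) ×ˢ Ioo 0 q |
          ij.1 * q + ij.2 * (2 * P) ∈ Ico (P * q + 1) (P * q + 1 + (P * q - (a + 1)))} +
          (P - 1) :=
        card_weight_below_le_card_weight_above hP hq (Nat.sub_le _ _)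
    _ ≤ _ := by
        gcongr
        rintro ⟨i, j⟩ hij
        simp only [mem_filter, mem_product, mem_Ioo, mem_Ico] at hij
        obtain ⟨⟨⟨hi, hip⟩, hj, hjq⟩, hw₁, hw₂⟩ := hij
        have hw₁' : ((P * q : ℕ) : ℝ) + 1 ≤ ((i * q + j * (2 * P) : ℕ) : ℝ) := by
          exact_mod_cast hw₁
        have hw₂' : ((i * q + j * (2 * P) : ℕ) : ℝ) + a + 1 ≤ 2 * ((P * q : ℕ) : ℝ) :=
          mod_cast (by omega : i * q + j * (2 * P) + a + 1 ≤ 2 * (P * q))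
        simp only [mem_boxPoints, mem_Ioo, Set.mem_Ioc]
        rw [natCast_div_add_natCast_div (by omega) (by omega), lt_div_iff₀ hD₀,
          div_le_iff₀ hD₀, hD]
        rw [hD] at ha_succ
        exact ⟨⟨hi, hip⟩, ⟨hj, hjq⟩, by linarith, by linarith⟩

theorem latticeCount_le_latticeCount_half_add {P q : ℕ} (hP : 0 < P) (hq : 0 < q)
    (hco : (2 * P).Coprime q) {t : ℝ} (ht₀ : 0 ≤ t) (ht : t ≤ 1 / 2) :
    latticeCount (2 * P) q t ≤ latticeCount (2 * P) q (1 / 2) + (P - 1) := by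
  have h_split :
      Set.Ioo t (t + 1) ⊆ Set.Ioo t (1 / 2) ∪ Set.Ioo (1 / 2) (t + 1) ∪ {1 / 2} := by
    intro x ⟨hx₁, hx₂⟩
    rcases lt_trichotomy x (1 / 2) with h | h | h
    · exact .inl (.inl ⟨hx₁, h⟩)
    · exact .inr h
    · exact .inl (.inr ⟨h, hx₂⟩)
  have h_half :
      Set.Ioo (1 / 2) (1 / 2 + 1) = Set.Ioo (1 / 2) (t + 1) ∪ Set.Ico (t + 1) (3 / 2) := by
    rw [Set.Ioo_union_Ico_eq_Ioo (by linarith) (by linarith)]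
    norm_num
  have h_reflect : #(boxPoints (2 * P) q (Set.Ico (t + 1) (3 / 2))) =
      #(boxPoints (2 * P) q (Set.Ioc (1 / 2) (1 - t))) := by
    rw [← card_boxPoints_preimage_two_sub, Set.preimage_const_sub_Ico]
    ring_nf
  have h_disj : Disjoint (Set.Ioo (1 / 2) (t + 1)) (Set.Ico (t + 1) (3 / 2)) :=
    Set.Ico_disjoint_Ico_same.mono_left Set.Ioo_subset_Ico_self
  rw [latticeCount_eq_card_boxPoints, latticeCount_eq_card_boxPoints, h_half, boxPoints_union,
    card_union_of_disjoint (disjoint_boxPoints h_disj), h_reflect]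
  calc #(boxPoints (2 * P) q (Set.Ioo t (t + 1)))
      ≤ #(boxPoints (2 * P) q (Set.Ioo t (1 / 2)) ∪
          boxPoints (2 * P) q (Set.Ioo (1 / 2) (t + 1))) := by
        refine card_le_card ?_
        have := boxPoints_mono (p := 2 * P) (q := q) h_split
        rwa [boxPoints_union, boxPoints_union, boxPoints_half_eq_empty hco, union_empty] at this
    _ ≤ #(boxPoints (2 * P) q (Set.Ioo t (1 / 2))) +
          #(boxPoints (2 * P) q (Set.Ioo (1 / 2) (t + 1))) := card_union_le _ _
    _ ≤ _ := by
        have := card_boxPoints_Ioo_half_le hP hq t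
        omega

theorem sigmaMax_le_even_general (p q : ℕ) (hp : 0 < p) (hco : Nat.Coprime p q)
    (hpe : Even p) :
    sigmaMax p q ≤ sigmaClassical p q + p - 2 := by
  obtain ⟨P, rfl⟩ : ∃ P, p = 2 * P := hpe.two_dvd
  have hq : 0 < q :=
    Nat.pos_of_ne_zero fun hq ↦ by rw [hq, Nat.coprime_zero_right] at hco; omega
  have hN : ∀ t ∈ Set.Ioo (0 : ℝ) 1,
      latticeCount (2 * P) q t ≤ latticeCount (2 * P) q (1 / 2) + (P - 1) := by
    rintro t ⟨ht₀, ht₁⟩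
    rcases le_total t (1 / 2) with ht | ht
    · exact latticeCount_le_latticeCount_half_add (by omega) hq hco ht₀.le ht
    · rw [← latticeCount_one_sub]
      exact latticeCount_le_latticeCount_half_add (by omega) hq hco (by linarith) (by linarith)
  have h_half : (1 / 2 : ℝ) ∈ Set.Ioo 0 1 := ⟨by norm_num, by norm_num⟩
  refine csSup_le ⟨_, Set.mem_image_of_mem _ h_half⟩ ?_
  rintro _ ⟨t, ht, rfl⟩
  have := hN t ht
  simp only [sigmaT, sigmaClassical]
  omega

theorem sigmaMax_le_even (p q : ℕ) (hp : 0 < p) (hpq : p < q) (hco : Nat.Coprime p q)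
    (hpe : Even p) :
    sigmaMax p q ≤ sigmaClassical p q + p - 2 :=
  sigmaMax_le_even_general p q hp hco hpe
end

section
/- Let 0 < p < q be coprime integers. Then the classical signature is given by the lattice-point formula σ(p,q) = (p−1)(q−1) − 4·∑_{0 < j < p, j ≡ p (mod 2)} ⌊j·q/(2p)⌋. -/
/-!
Write `w(i, j) = iq + jp`, so that `i/p + j/q = w/(pq)`. The classical signature is
`2 N - (p-1)(q-1)`, where `N` counts the points of the open box `(0,p) × (0,q)` with
`pq < 2w < 3pq`. Coprimality puts no box point on the lines `2w = pq` and `2w = 3pq`, so the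
box is the disjoint union of this middle band and two corners, which the reflection
`(i, j) ↦ (p - i, q - j)` exchanges. Hence `σ = (p-1)(q-1) - 4·#(lower corner)`. Column `i` of
the lower corner holds the `j > 0` with `2pj < (p - 2i)q`, i.e. `⌊(p - 2i)q / 2p⌋` points, and the
substitution `j = p - 2i` gives the formula.
-/

open Finset

theorem sum_Ioo_sub_two_mul {M : Type*} [AddCommMonoid M] {p : ℕ} (f : ℕ → M)
    (hf : f 0 = 0) :
    ∑ i ∈ Ioo 0 p, f (p - 2 * i) = ∑ j ∈ (Ioo 0 p).filter (fun j => j % 2 = p % 2), f j := by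
  have hzero : ∑ i ∈ (Ioo 0 p).filter (fun i => ¬2 * i < p), f (p - 2 * i) = 0 :=
    sum_eq_zero fun i hi => by rw [Nat.sub_eq_zero_of_le (not_lt.1 (mem_filter.1 hi).2), hf]
  rw [← sum_filter_add_sum_filter_not (Ioo 0 p) (fun i => 2 * i < p), hzero, add_zero]
  refine sum_nbij' (fun i => p - 2 * i) (fun j => (p - j) / 2) ?_ ?_ ?_ ?_ fun _ _ => rfl <;>
  · intro i hi
    simp only [mem_filter, mem_Ioo] at hi ⊢
    omega

namespace TorusKnot

variable (p q : ℕ)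

def weight (ij : ℕ × ℕ) : ℕ := ij.1 * q + ij.2 * p

def latticeBox : Finset (ℕ × ℕ) := Ioo 0 p ×ˢ Ioo 0 q

def lowerCorner : Finset (ℕ × ℕ) :=
  (latticeBox p q).filter fun ij => 2 * weight p q ij < p * q

def middleBand : Finset (ℕ × ℕ) :=
  (latticeBox p q).filter fun ij => p * q < 2 * weight p q ij ∧ 2 * weight p q ij < 3 * (p * q)

def upperCorner : Finset (ℕ × ℕ) :=
  (latticeBox p q).filter fun ij => 3 * (p * q) < 2 * weight p q ij

variable {p q}

theorem card_latticeBox (hp : 0 < p) (hq : 0 < q) :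
    ((latticeBox p q).card : ℤ) = ((p : ℤ) - 1) * ((q : ℤ) - 1) := by
  rw [latticeBox, card_product, Nat.card_Ioo, Nat.card_Ioo, Nat.sub_zero, Nat.sub_zero]
  push_cast [Nat.cast_sub hp, Nat.cast_sub hq]
  ring

theorem half_lt_div_add_div_iff (hp : 0 < p) (hq : 0 < q) (i j : ℕ) :
    (1 / 2 : ℝ) < i / p + j / q ↔ p * q < 2 * weight p q (i, j) := by
  have hp' : (0 : ℝ) < p := by exact_mod_cast hp
  have hq' : (0 : ℝ) < q := by exact_mod_cast hq
  rw [div_add_div _ _ hp'.ne' hq'.ne', lt_div_iff₀ (by positivity), ← Nat.cast_lt (α := ℝ),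
    weight]
  push_cast
  constructor <;> intro h <;> linarith

theorem div_add_div_lt_three_halves_iff (hp : 0 < p) (hq : 0 < q) (i j : ℕ) :
    (i / p + j / q : ℝ) < 1 / 2 + 1 ↔ 2 * weight p q (i, j) < 3 * (p * q) := by
  have hp' : (0 : ℝ) < p := by exact_mod_cast hp
  have hq' : (0 : ℝ) < q := by exact_mod_cast hq
  rw [div_add_div _ _ hp'.ne' hq'.ne', div_lt_iff₀ (by positivity), ← Nat.cast_lt (α := ℝ),
    weight]
  push_cast
  constructor <;> intro h <;> linarith

theorem latticeCount_half (hp : 0 < p) (hq : 0 < q) :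
    latticeCount p q (1 / 2) = (middleBand p q).card := by
  rw [latticeCount, ← Set.ncard_coe_finset]
  congr 1
  ext ⟨i, j⟩
  simp only [Set.mem_ofPred_eq, middleBand, latticeBox, coe_filter, mem_product, mem_Ioo,
    half_lt_div_add_div_iff hp hq, div_add_div_lt_three_halves_iff hp hq]
  tauto

theorem two_mul_eq_of_dvd_two_mul {i : ℕ} (hi : 0 < i) (hip : i < p) (h : p ∣ 2 * i) :
    2 * i = p := by
  obtain ⟨c, hc⟩ := h
  have : c < 2 := by nlinarith
  interval_cases c <;> omega

theorem two_mul_weight_ne (hco : Nat.Coprime p q) {ij : ℕ × ℕ} (hij : ij ∈ latticeBox p q)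
    (k : ℕ) : 2 * weight p q ij ≠ k * (p * q) := by
  obtain ⟨i, j⟩ := ij
  simp only [latticeBox, mem_product, mem_Ioo] at hij
  obtain ⟨⟨hi, hip⟩, hj, hjq⟩ := hij
  intro h
  have hsplit_p : 2 * weight p q (i, j) = 2 * i * q + p * (2 * j) := by rw [weight]; ring
  have hsplit_q : 2 * weight p q (i, j) = 2 * j * p + q * (2 * i) := by rw [weight]; ring
  have hp_dvd : p ∣ 2 * i * q + p * (2 * j) := ⟨k * q, by rw [← hsplit_p, h]; ring⟩
  have hq_dvd : q ∣ 2 * j * p + q * (2 * i) := ⟨k * p, by rw [← hsplit_q, h]; ring⟩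
  have hi2 := two_mul_eq_of_dvd_two_mul hi hip
    (hco.dvd_of_dvd_mul_right ((Nat.dvd_add_left (dvd_mul_right p _)).mp hp_dvd))
  have hj2 := two_mul_eq_of_dvd_two_mul hj hjq
    (hco.symm.dvd_of_dvd_mul_right ((Nat.dvd_add_left (dvd_mul_right q _)).mp hq_dvd))
  have : 2 ∣ Nat.gcd p q := Nat.dvd_gcd ⟨i, hi2.symm⟩ ⟨j, hj2.symm⟩
  rw [hco] at this
  omega

theorem card_latticeBox_eq_add (hco : Nat.Coprime p q) :
    (latticeBox p q).card =
      (middleBand p q).card + ((lowerCorner p q).card + (upperCorner p q).card) := by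
  have houtside : (latticeBox p q).filter (fun ij => ¬(p * q < 2 * weight p q ij ∧
      2 * weight p q ij < 3 * (p * q))) = lowerCorner p q ∪ upperCorner p q := by
    rw [lowerCorner, upperCorner, ← filter_or]
    refine filter_congr fun ij hij => ?_
    have h₁ := two_mul_weight_ne hco hij 1
    have h₃ := two_mul_weight_ne hco hij 3
    omega
  have hdisj : Disjoint (lowerCorner p q) (upperCorner p q) :=
    disjoint_filter.2 fun _ _ h₁ h₂ => by omega
  rw [← card_filter_add_card_filter_not (fun ij => p * q < 2 * weight p q ij ∧
    2 * weight p q ij < 3 * (p * q)), houtside, card_union_of_disjoint hdisj]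
  rfl

theorem weight_reflect_add {i j : ℕ} (hi : i ≤ p) (hj : j ≤ q) :
    weight p q (p - i, q - j) + weight p q (i, j) = 2 * (p * q) := by
  simp only [weight]
  zify [hi, hj]
  ring

theorem card_lowerCorner_eq_card_upperCorner :
    (lowerCorner p q).card = (upperCorner p q).card := by
  refine card_nbij' (fun ij => (p - ij.1, q - ij.2)) (fun ij => (p - ij.1, q - ij.2))
    ?_ ?_ ?_ ?_ <;>
  · rintro ⟨i, j⟩ hij
    simp only [lowerCorner, upperCorner, latticeBox, coe_filter, Set.mem_ofPred_eq, mem_product,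
      mem_Ioo, Prod.mk.injEq] at hij ⊢
    have := weight_reflect_add (p := p) (q := q) hij.1.1.2.le hij.1.2.2.le
    omega

theorem card_lowerCorner_eq_sum_columns :
    (lowerCorner p q).card =
      ∑ i ∈ Ioo 0 p, ((Ioo 0 q).filter fun j => 2 * weight p q (i, j) < p * q).card := by
  simp only [lowerCorner, latticeBox, card_filter, sum_product]

/-- For `2 * i ≥ p` the column is empty and the truncated `p - 2 * i` is `0`. -/
theorem card_lowerCorner_column (hco : Nat.Coprime p q) {i : ℕ} (hi : 0 < i) (hip : i < p) :
    ((Ioo 0 q).filter fun j => 2 * weight p q (i, j) < p * q).card = (p - 2 * i) * q / (2 * p) := by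
  set M := (p - 2 * i) * q with hM
  have hcolumn : ∀ j, 2 * weight p q (i, j) < p * q ↔ j * (2 * p) < M := fun j => by
    rw [weight, hM, Nat.sub_mul, Nat.lt_sub_iff_add_lt]
    constructor <;> intro h <;> linarith
  -- coprimality excludes `2pj = M`, so the strict bound on `j` becomes a floor
  have hne : ∀ j, 0 < j → j * (2 * p) ≠ M := fun j hj he => by
    have hdvd : p ∣ (p - 2 * i) * q := ⟨2 * j, by rw [← hM, ← he]; ring⟩
    rw [Nat.eq_zero_of_dvd_of_lt (hco.dvd_of_dvd_mul_right hdvd) (by omega), zero_mul] at hM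
    have : 0 < j * (2 * p) := Nat.mul_pos hj (by omega)
    omega
  have hMle : M ≤ p * q := Nat.mul_le_mul_right q (Nat.sub_le p (2 * i))
  suffices hIoc : (Ioo 0 q).filter (fun j => 2 * weight p q (i, j) < p * q) = Ioc 0 (M / (2 * p)) by
    rw [hIoc, Nat.card_Ioc, Nat.sub_zero]
  ext j
  simp only [mem_filter, mem_Ioo, mem_Ioc, hcolumn, Nat.le_div_iff_mul_le (by omega : 0 < 2 * p)]
  constructor
  · rintro ⟨⟨hj, -⟩, h⟩
    exact ⟨hj, h.le⟩
  · rintro ⟨hj, h⟩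
    have hlt := h.lt_of_ne (hne j hj)
    exact ⟨⟨hj, by nlinarith⟩, hlt⟩

theorem card_lowerCorner (hco : Nat.Coprime p q) :
    (lowerCorner p q).card =
      ∑ j ∈ (Ioo 0 p).filter (fun j => j % 2 = p % 2), j * q / (2 * p) := by
  rw [card_lowerCorner_eq_sum_columns, sum_congr rfl fun i hi =>
    card_lowerCorner_column hco (mem_Ioo.1 hi).1 (mem_Ioo.1 hi).2]
  exact sum_Ioo_sub_two_mul (fun j => j * q / (2 * p)) (by simp)

end TorusKnot

open TorusKnot

theorem sigmaClassical_lattice_formula (p q : ℕ) (hp : 0 < p) (hpq : p < q)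
    (hco : Nat.Coprime p q) :
    sigmaClassical p q =
      ((p : ℤ) - 1) * ((q : ℤ) - 1) -
        4 * ∑ j ∈ (Finset.Ioo 0 p).filter (fun j => j % 2 = p % 2),
          ((j : ℤ) * (q : ℤ)) / (2 * (p : ℤ)) := by
  have hq : 0 < q := hp.trans hpq
  have hbox := card_latticeBox hp hq
  rw [card_latticeBox_eq_add hco, ← card_lowerCorner_eq_card_upperCorner, card_lowerCorner hco]
    at hbox
  rw [sigmaClassical, sigmaT, latticeCount_half hp hq]
  push_cast at hbox ⊢
  linarith
end

section
/- Let 0 < p < q be coprime integers with p even. Then the classical signature satisfies σ(p, p+q) = σ(p, q) + p²/2. -/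
open Finset

namespace Finset

lemma card_filter_lt_mul_Ioo {d : ℕ} (hd : 0 < d) (a q : ℕ) :
    #{j ∈ Ioo 0 q | a * q < j * d} = q - 1 - a * q / d := by
  have h : {j ∈ Ioo 0 q | a * q < j * d} = Ioo (a * q / d) q := by
    ext j
    simp only [mem_filter, mem_Ioo, Nat.div_lt_iff_lt_mul hd]
    refine ⟨fun ⟨⟨_, hjq⟩, hj⟩ => ⟨hj, hjq⟩, fun ⟨hj, hjq⟩ => ⟨⟨?_, hjq⟩, hj⟩⟩
    exact Nat.pos_of_ne_zero (by rintro rfl; simp at hj)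
  rw [h, Nat.card_Ioo]
  omega

lemma card_filter_mul_lt_Ioo {a d : ℕ} (hd : 0 < d) (had : a ≤ d) (q : ℕ) :
    #{j ∈ Ioo 0 q | j * d < a * q} = (a * q - 1) / d := by
  have h : {j ∈ Ioo 0 q | j * d < a * q} = Ioc 0 ((a * q - 1) / d) := by
    ext j
    simp only [mem_filter, mem_Ioo, mem_Ioc, Nat.le_div_iff_mul_le hd]
    have hjq : j * d < a * q → j < q := fun hj => Nat.lt_of_mul_lt_mul_right <|
      hj.trans_le (Nat.mul_le_mul_right q had) |>.trans_eq (mul_comm d q)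
    constructor
    · rintro ⟨⟨hj0, -⟩, hj⟩
      exact ⟨hj0, by omega⟩
    · rintro ⟨hj0, hj⟩
      have := Nat.mul_pos hj0 hd
      have hj' : j * d < a * q := by omega
      exact ⟨⟨hj0, hjq hj'⟩, hj'⟩
  rw [h, Nat.card_Ioc, Nat.sub_zero]

end Finset

/-- The `i`-th row of `latticeCount p q (1 / 2)`, with the inequalities multiplied by `2 p q`. -/
def latticeRowCount (p q i : ℕ) : ℕ :=
  #{j ∈ Ioo 0 q | p * q < 2 * (i * q + j * p) ∧ 2 * (i * q + j * p) < 3 * (p * q)}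

lemma latticeCount_half_eq_sum (p q : ℕ) :
    latticeCount p q (1 / 2) = ∑ i ∈ Ioo 0 p, latticeRowCount p q i := by
  have hset : {ij : ℕ × ℕ | 0 < ij.1 ∧ ij.1 < p ∧ 0 < ij.2 ∧ ij.2 < q ∧
      (1 / 2 : ℝ) < (ij.1 : ℝ) / p + (ij.2 : ℝ) / q ∧
      (ij.1 : ℝ) / p + (ij.2 : ℝ) / q < 1 / 2 + 1} =
      ↑{ij ∈ Ioo 0 p ×ˢ Ioo 0 q | p * q < 2 * (ij.1 * q + ij.2 * p) ∧
        2 * (ij.1 * q + ij.2 * p) < 3 * (p * q)} := by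
    ext ⟨i, j⟩
    simp only [Set.mem_ofPred_eq, coe_filter, mem_product, mem_Ioo, and_assoc]
    refine and_congr_right fun hi => and_congr_right fun hip =>
      and_congr_right fun hj => and_congr_right fun hjq => ?_
    have hp : (0 : ℝ) < p := by exact_mod_cast hi.trans hip
    have hq : (0 : ℝ) < q := by exact_mod_cast hj.trans hjq
    rw [div_add_div _ _ hp.ne' hq.ne', lt_div_iff₀ (by positivity), div_lt_iff₀ (by positivity),
      ← @Nat.cast_lt ℝ, ← @Nat.cast_lt ℝ]
    push_cast
    constructor <;> rintro ⟨h1, h2⟩ <;> constructor <;> linarith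
  rw [latticeCount, hset, Set.ncard_coe_finset]
  simp only [latticeRowCount, card_filter, sum_product]

lemma latticeRowCount_two_mul_of_le {m i : ℕ} (hi : 0 < i) (him : i ≤ m) (q : ℕ) :
    latticeRowCount (2 * m) q i = q - 1 - (m - i) * q / (2 * m) := by
  obtain ⟨k, rfl⟩ := Nat.exists_eq_add_of_le him
  rw [latticeRowCount, Nat.add_sub_cancel_left, ← card_filter_lt_mul_Ioo (by omega) k q]
  congr 1
  refine filter_congr fun j hj => ?_
  rw [mem_Ioo] at hj
  have : i * j < i * q := Nat.mul_lt_mul_of_pos_left hj.2 hi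
  have : k * j ≤ k * q := Nat.mul_le_mul_left k hj.2.le
  constructor
  · rintro ⟨h, -⟩; nlinarith
  · intro h; constructor <;> nlinarith

lemma latticeRowCount_two_mul_of_lt {m i : ℕ} (hmi : m < i) (hi : i < 2 * m) (q : ℕ) :
    latticeRowCount (2 * m) q i = ((3 * m - i) * q - 1) / (2 * m) := by
  rw [latticeRowCount,
    ← card_filter_mul_lt_Ioo (a := 3 * m - i) (d := 2 * m) (by omega) (by omega) q]
  congr 1
  refine filter_congr fun j hj => ?_
  rw [mem_Ioo] at hj
  have e : (3 * m - i) * q + i * q = 3 * m * q := by rw [← add_mul, Nat.sub_add_cancel (by omega)]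
  have : m * q ≤ i * q := Nat.mul_le_mul_right q hmi.le
  have : 0 < j * m := Nat.mul_pos hj.1 (by omega)
  constructor
  · rintro ⟨-, h⟩; nlinarith
  · intro h; constructor <;> nlinarith

def latticeRowIncrement (m i : ℕ) : ℕ :=
  if i ≤ m then m + i else 3 * m - i

lemma latticeRowCount_two_mul_add {m q i : ℕ} (hq : 0 < q) (hi : 0 < i) (hi2 : i < 2 * m) :
    latticeRowCount (2 * m) (2 * m + q) i =
      latticeRowCount (2 * m) q i + latticeRowIncrement m i := by
  rw [latticeRowIncrement]
  split_ifs with him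
  · rw [latticeRowCount_two_mul_of_le hi him, latticeRowCount_two_mul_of_le hi him,
      mul_add, mul_comm (m - i), Nat.mul_add_div (by omega)]
    have : (m - i) * q < 2 * m * q := Nat.mul_lt_mul_of_pos_right (by omega) hq
    have := Nat.div_lt_of_lt_mul this
    omega
  · rw [latticeRowCount_two_mul_of_lt (by omega) hi2, latticeRowCount_two_mul_of_lt (by omega) hi2]
    have : 0 < (3 * m - i) * q := Nat.mul_pos (by omega) hq
    rw [show (3 * m - i) * (2 * m + q) - 1 = 2 * m * (3 * m - i) + ((3 * m - i) * q - 1) by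
      rw [mul_add, mul_comm (3 * m - i), Nat.add_sub_assoc this], Nat.mul_add_div (by omega)]
    omega

lemma sum_latticeRowIncrement (m : ℕ) :
    ∑ i ∈ Ioo 0 (2 * m), latticeRowIncrement m i + m = 3 * (m * m) := by
  have hcard : #{i ∈ Ioo 0 (2 * m) | i ≤ m} = m := by
    rw [show {i ∈ Ioo 0 (2 * m) | i ≤ m} = Ioc 0 m by ext; simp; omega, Nat.card_Ioc,
      Nat.sub_zero]
  have hreflect : ∑ i ∈ Ioo 0 (2 * m) with ¬i ≤ m, (3 * m - i) =
      ∑ i ∈ Ioo 0 (2 * m) with ¬i ≤ m, i :=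
    sum_nbij' (3 * m - ·) (3 * m - ·) (by simp; omega) (by simp; omega) (by simp; omega)
      (by simp; omega) (fun _ _ => rfl)
  have hgauss : ∑ i ∈ Ioo 0 (2 * m), i = ∑ i ∈ range (2 * m), i :=
    sum_subset (fun i hi => by simp at *; omega) (fun i _ hi => by simp at *; omega)
  have := sum_range_id_mul_two (2 * m)
  simp only [latticeRowIncrement]
  rw [sum_ite, sum_add_distrib, sum_const, hcard, smul_eq_mul, hreflect, add_assoc (m * m),
    sum_filter_add_sum_filter_not, hgauss]
  rcases Nat.eq_zero_or_pos m with rfl | hm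
  · rfl
  zify [show 1 ≤ 2 * m by omega] at this ⊢
  linarith

lemma sum_latticeRowCount_two_mul_add (m : ℕ) {q : ℕ} (hq : 0 < q) :
    ∑ i ∈ Ioo 0 (2 * m), latticeRowCount (2 * m) (2 * m + q) i + m =
      ∑ i ∈ Ioo 0 (2 * m), latticeRowCount (2 * m) q i + 3 * (m * m) := by
  rw [sum_congr rfl fun i hi => latticeRowCount_two_mul_add hq (mem_Ioo.1 hi).1 (mem_Ioo.1 hi).2,
    sum_add_distrib, add_assoc, sum_latticeRowIncrement]

theorem sigmaClassical_add_p_even_general (p q : ℕ) (hpq : p < q) (hpe : Even p) :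
    sigmaClassical p (p + q) = sigmaClassical p q + (p : ℤ) ^ 2 / 2 := by
  obtain ⟨m, rfl⟩ := hpe
  rw [← two_mul]
  have hsum := sum_latticeRowCount_two_mul_add m (by omega : 0 < q)
  have hsquare : ((2 * m : ℕ) : ℤ) ^ 2 / 2 = 2 * m ^ 2 := by
    rw [Nat.cast_mul, Nat.cast_two, mul_pow, show (2 : ℤ) ^ 2 = 2 * 2 by norm_num, mul_assoc,
      Int.mul_ediv_cancel_left _ two_ne_zero]
  simp only [sigmaClassical, sigmaT, latticeCount_half_eq_sum, hsquare]
  zify at hsum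
  push_cast
  linear_combination 2 * hsum

theorem sigmaClassical_add_p_even (p q : ℕ) (hp : 0 < p) (hpq : p < q)
    (hco : Nat.Coprime p q) (hpe : Even p) :
    sigmaClassical p (p + q) = sigmaClassical p q + (p : ℤ) ^ 2 / 2 :=
  sigmaClassical_add_p_even_general p q hpq hpe
end

section
/- Let 0 < p < q be coprime integers with p odd. Then σ(p, p+q) = σ(p, q) − 4·#{ j ∈ ℤ : 0 < j < p, j odd, (j·q mod 2p) > p } + (p−1)(p+3)/2, where (j·q mod 2p) denotes the unique representative in [0, 2p) of j·q modulo 2p. -/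
/-!
For odd `p = 2K + 1` the columns `i` and `p - i` of Litherland's count at `t = 1/2` have the same
size, and for `2i ≤ p` column `i` holds `q - 1 - ⌊q(p - 2i)/2p⌋` points, so
`σ(p, q) = (p - 1)(q - 1) - 4 ∑_{k<K} ⌊q(2k + 1)/2p⌋`. Replacing `q` by `p + q` raises the `k`-th
floor by `k`, plus one exactly when `q(2k + 1) mod 2p > p` (coprimality excludes `= p`).
-/

open Finset

noncomputable def columnCount (p q : ℕ) (t : ℝ) (i : ℕ) : ℕ :=
  #((Ioo 0 q).filter fun j : ℕ => t < (i : ℝ) / p + (j : ℝ) / q ∧ (i : ℝ) / p + (j : ℝ) / q < t + 1)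

theorem latticeCount_eq_sum_columnCount (p q : ℕ) (t : ℝ) :
    latticeCount p q t = ∑ i ∈ Ioo 0 p, columnCount p q t i := by
  have hset : {ij : ℕ × ℕ | 0 < ij.1 ∧ ij.1 < p ∧ 0 < ij.2 ∧ ij.2 < q ∧
      t < (ij.1 : ℝ) / p + (ij.2 : ℝ) / q ∧ (ij.1 : ℝ) / p + (ij.2 : ℝ) / q < t + 1} =
      ↑{ij ∈ Ioo 0 p ×ˢ Ioo 0 q |
        t < (ij.1 : ℝ) / p + (ij.2 : ℝ) / q ∧ (ij.1 : ℝ) / p + (ij.2 : ℝ) / q < t + 1} := by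
    ext ⟨i, j⟩
    simp [and_assoc]
  rw [latticeCount, hset, Set.ncard_coe_finset, card_filter, sum_product]
  exact sum_congr rfl fun i _ => (card_filter _ _).symm

theorem cast_sub_div_self {a n : ℕ} (ha : a ≤ n) (hn : 0 < n) :
    ((n - a : ℕ) : ℝ) / n = 1 - (a : ℝ) / n := by
  rw [Nat.cast_sub ha, sub_div, div_self (by positivity)]

/-- The reflection `(i, j) ↦ (p - i, q - j)` sends `i/p + j/q` to `2 - (i/p + j/q)`. -/
theorem columnCount_sub {p q i : ℕ} (t : ℝ) (hp : 0 < p) (hi : i ≤ p) :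
    columnCount p q t (p - i) = columnCount p q (1 - t) i := by
  have reflect : ∀ j ∈ Ioo 0 q, (i : ℝ) / p + ((q - j : ℕ) : ℝ) / q =
      2 - (((p - i : ℕ) : ℝ) / p + (j : ℝ) / q) := by
    intro j hj
    rw [mem_Ioo] at hj
    rw [cast_sub_div_self hi hp, cast_sub_div_self hj.2.le (by omega)]
    ring
  unfold columnCount
  apply card_nbij' (q - ·) (q - ·)
  · intro j hj
    simp only [coe_filter, mem_Ioo, Set.mem_ofPred_eq] at hj ⊢
    have := reflect j (mem_Ioo.2 hj.1)
    exact ⟨by omega, by linarith, by linarith⟩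
  · intro j hj
    simp only [coe_filter, mem_Ioo, Set.mem_ofPred_eq] at hj ⊢
    have := reflect (q - j) (mem_Ioo.2 (by omega))
    rw [Nat.sub_sub_self hj.1.2.le] at this
    exact ⟨by omega, by linarith, by linarith⟩
  all_goals
    intro j hj
    simp only [coe_filter, mem_Ioo, Set.mem_ofPred_eq] at hj
    exact Nat.sub_sub_self hj.1.2.le

/-- For `2i ≤ p` the upper bound `i/p + j/q < 3/2` holds for every `j < q`. -/
theorem columnCount_half_add_div {p q i : ℕ} (hp : 0 < p) (hq : 0 < q) (hi : 2 * i ≤ p) :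
    columnCount p q (1 / 2) i + q * (p - 2 * i) / (2 * p) + 1 = q := by
  suffices h : (Ioo 0 q).filter (fun j : ℕ => (1 / 2 : ℝ) < (i : ℝ) / p + (j : ℝ) / q ∧
      (i : ℝ) / p + (j : ℝ) / q < 1 / 2 + 1) = Ioo (q * (p - 2 * i) / (2 * p)) q by
    have : q * (p - 2 * i) / (2 * p) < q :=
      (Nat.div_lt_iff_lt_mul (by omega)).2 (Nat.mul_lt_mul_of_pos_left (by omega) hq)
    rw [columnCount, h, Nat.card_Ioo]
    omega
  ext j
  simp only [mem_filter, mem_Ioo, Nat.div_lt_iff_lt_mul (by omega : 0 < 2 * p)]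
  have hp' : (0 : ℝ) < p := by exact_mod_cast hp
  have hq' : (0 : ℝ) < q := by exact_mod_cast hq
  have hi' : (2 * i : ℝ) ≤ p := by exact_mod_cast hi
  have lower_iff : q * (p - 2 * i) < j * (2 * p) ↔ (1 / 2 : ℝ) < (i : ℝ) / p + (j : ℝ) / q := by
    rw [div_add_div _ _ hp'.ne' hq'.ne', lt_div_iff₀ (by positivity), ← Nat.cast_lt (α := ℝ)]
    push_cast [Nat.cast_sub hi]
    constructor <;> intro h <;> linarith
  rw [← lower_iff]
  constructor
  · rintro ⟨⟨-, hjq⟩, h, -⟩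
    exact ⟨h, hjq⟩
  · rintro ⟨h, hjq⟩
    have hip : (i : ℝ) / p ≤ 1 / 2 := by rw [div_le_iff₀ hp']; linarith
    have hjq' : (j : ℝ) / q < 1 := by rw [div_lt_one hq']; exact_mod_cast hjq
    refine ⟨⟨Nat.pos_of_ne_zero ?_, hjq⟩, h, by linarith⟩
    rintro rfl
    simp at h

theorem sum_Ioo_two_mul_add_one {M : Type*} [AddCommMonoid M] (K : ℕ) (f : ℕ → M) :
    ∑ i ∈ Ioo 0 (2 * K + 1), f i = ∑ k ∈ range K, (f (K - k) + f (K + 1 + k)) := by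
  have hsplit : Ioo 0 (2 * K + 1) = Ico 1 (K + 1) ∪ Ico (K + 1) (2 * K + 1) := by
    rw [Ico_union_Ico_eq_Ico (by omega) (by omega)]
    ext; simp only [mem_Ioo, mem_Ico]; omega
  rw [hsplit, sum_union (Ico_disjoint_Ico_consecutive _ _ _), sum_Ico_eq_sum_range,
    sum_Ico_eq_sum_range, sum_add_distrib, ← sum_range_reflect]
  congr 1
  · refine sum_congr (by simp) fun k hk => ?_
    rw [mem_range] at hk
    congr 1
    omega
  · simp only [show 2 * K + 1 - (K + 1) = K by omega]

theorem sigmaClassical_two_mul_add_one (K Q : ℕ) (hQ : 0 < Q) :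
    sigmaClassical (2 * K + 1) Q = 2 * K * ((Q : ℤ) - 1) -
      4 * ∑ k ∈ range K, ((Q * (2 * k + 1) / (2 * (2 * K + 1)) : ℕ) : ℤ) := by
  have hcolumns : ∀ k ∈ range K,
      columnCount (2 * K + 1) Q (1 / 2) (K - k) + columnCount (2 * K + 1) Q (1 / 2) (K + 1 + k) +
        2 * (Q * (2 * k + 1) / (2 * (2 * K + 1))) + 2 = 2 * Q := by
    intro k hk
    rw [mem_range] at hk
    have hsymm := columnCount_sub (q := Q) (1 / 2) (by omega : 0 < 2 * K + 1)
      (by omega : K - k ≤ 2 * K + 1)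
    have hcount := columnCount_half_add_div (q := Q) (by omega : 0 < 2 * K + 1) hQ
      (by omega : 2 * (K - k) ≤ 2 * K + 1)
    rw [show 2 * K + 1 - (K - k) = K + 1 + k by omega, show (1 : ℝ) - 1 / 2 = 1 / 2 by norm_num]
      at hsymm
    rw [show 2 * K + 1 - 2 * (K - k) = 2 * k + 1 by omega] at hcount
    omega
  have hN := sum_congr rfl hcolumns
  rw [sum_add_distrib, sum_add_distrib, ← sum_Ioo_two_mul_add_one, ← mul_sum,
    ← latticeCount_eq_sum_columnCount, sum_const, card_range, sum_const, card_range] at hN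
  have hNz := congrArg (Nat.cast (R := ℤ)) hN
  simp only [smul_eq_mul, Nat.cast_add, Nat.cast_mul, Nat.cast_sum, Nat.cast_ofNat] at hNz
  rw [sigmaClassical, sigmaT]
  simp only [Nat.cast_add, Nat.cast_mul, Nat.cast_ofNat, Nat.cast_one]
  linear_combination 2 * hNz

theorem add_mul_odd_div_two_mul {p q k : ℕ} (hp : 0 < p) (hr : q * (2 * k + 1) % (2 * p) ≠ p) :
    (p + q) * (2 * k + 1) / (2 * p) =
      k + q * (2 * k + 1) / (2 * p) + if p < q * (2 * k + 1) % (2 * p) then 1 else 0 := by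
  have hdiv := Nat.div_add_mod (q * (2 * k + 1)) (2 * p)
  have hr2p : q * (2 * k + 1) % (2 * p) < 2 * p := Nat.mod_lt _ (by omega)
  generalize q * (2 * k + 1) / (2 * p) = d at hdiv ⊢
  generalize q * (2 * k + 1) % (2 * p) = r at hdiv hr hr2p ⊢
  rcases lt_or_gt_of_ne hr with h | h
  · rw [if_neg h.not_gt]
    apply Nat.div_eq_of_lt_le <;> nlinarith
  · rw [if_pos h]
    apply Nat.div_eq_of_lt_le <;> nlinarith

theorem Nat.Coprime.mul_mod_two_mul_ne {p q m : ℕ} (hco : Nat.Coprime p q) (hm : 0 < m)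
    (hmp : m < p) : q * m % (2 * p) ≠ p := by
  intro h
  have hdvd : p ∣ q * m := Nat.dvd_of_mod_eq_zero <| by
    rw [← Nat.mod_mod_of_dvd _ (Nat.dvd_mul_left p 2), h, Nat.mod_self]
  exact absurd (Nat.le_of_dvd hm (hco.dvd_of_dvd_mul_left hdvd)) (by omega)

theorem card_filter_odd_Ioo (K : ℕ) (P : ℕ → Prop) [DecidablePred P] :
    #{j ∈ Ioo 0 (2 * K + 1) | j % 2 = 1 ∧ P j} = #{k ∈ range K | P (2 * k + 1)} := by
  refine card_nbij' (· / 2) (2 * · + 1) ?_ ?_ ?_ ?_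
  · intro j hj
    simp only [coe_filter, mem_Ioo, mem_range, Set.mem_ofPred_eq] at hj ⊢
    refine ⟨by omega, ?_⟩
    rw [show 2 * (j / 2) + 1 = j by omega]
    exact hj.2.2
  · intro k hk
    simp only [coe_filter, mem_Ioo, mem_range, Set.mem_ofPred_eq] at hk ⊢
    exact ⟨⟨by omega, by omega⟩, by omega, hk.2⟩
  · intro j hj
    simp only [coe_filter, mem_Ioo, Set.mem_ofPred_eq] at hj
    change 2 * (j / 2) + 1 = j
    omega
  · intro k _
    change (2 * k + 1) / 2 = k
    omega

theorem sigmaClassical_add_p_odd_general (p q : ℕ) (hpq : p < q)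
    (hco : Nat.Coprime p q) (hpo : Odd p) :
    sigmaClassical p (p + q) =
      sigmaClassical p q -
        4 * (((Finset.Ioo 0 p).filter
          (fun j => j % 2 = 1 ∧ p < (j * q) % (2 * p))).card : ℤ) +
        ((p : ℤ) - 1) * ((p : ℤ) + 3) / 2 := by
  obtain ⟨K, rfl⟩ := hpo
  have hfloor : ∀ k ∈ range K, (2 * K + 1 + q) * (2 * k + 1) / (2 * (2 * K + 1)) =
      k + q * (2 * k + 1) / (2 * (2 * K + 1)) +
        if 2 * K + 1 < (2 * k + 1) * q % (2 * (2 * K + 1)) then 1 else 0 := by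
    intro k hk
    rw [mem_range] at hk
    rw [mul_comm (2 * k + 1) q]
    exact add_mul_odd_div_two_mul (by omega) (hco.mul_mod_two_mul_ne (by omega) (by omega))
  have hgauss : (∑ k ∈ range K, (k : ℤ)) * 2 = K * (K - 1) := by
    rw [← Nat.cast_sum, ← Nat.cast_ofNat, ← Nat.cast_mul, sum_range_id_mul_two]
    rcases K with _ | K <;> simp
  have hconst : (((2 * K + 1 : ℕ) : ℤ) - 1) * ((2 * K + 1 : ℕ) + 3) / 2 = 2 * K * (K + 2) := by
    rw [Int.ediv_eq_of_eq_mul_left two_ne_zero]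
    push_cast
    ring
  rw [sigmaClassical_two_mul_add_one K _ (by omega), sigmaClassical_two_mul_add_one K q (by omega),
    card_filter_odd_Ioo, card_filter, hconst]
  simp only [← Nat.cast_sum]
  rw [sum_congr rfl hfloor, sum_add_distrib, sum_add_distrib]
  push_cast
  linear_combination (-2) * hgauss

theorem sigmaClassical_add_p_odd (p q : ℕ) (hp : 0 < p) (hpq : p < q)
    (hco : Nat.Coprime p q) (hpo : Odd p) :
    sigmaClassical p (p + q) =
      sigmaClassical p q -
        4 * (((Finset.Ioo 0 p).filter
          (fun j => j % 2 = 1 ∧ p < (j * q) % (2 * p))).card : ℤ) +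
        ((p : ℤ) - 1) * ((p : ℤ) + 3) / 2 :=
  sigmaClassical_add_p_odd_general p q hpq hco hpo
end

section
/- Let p > 0 be an integer. Then σ̂(p, p+1) = σ(p, p+1) + (p − 2) if p is even, and σ̂(p, p+1) = σ(p, p+1) if p is odd. -/
/-!
Write `x = (i, j)` for a lattice point with `0 < i < p`, `0 < j ≤ p`; its value
`i/p + j/(p+1) = ((i + j) p + i) / (p (p+1))` determines `i + j` and `i` as quotient and
remainder. Adding `(⌊p/2⌋, ⌈p/2⌉ + 1)` raises the value by at least `1`, so for every `t` at
least one point of each such pair, with the lower point in `(0, ⌈p/2⌉) × (0, ⌊p/2⌋)`, lies outside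
the window `(t, t+1)`. At `t* = (⌊p/2⌋ + 1)/(p + 1)` the window is exactly the diagonal band
`⌊p/2⌋ + 1 ≤ i + j ≤ ⌊p/2⌋ + 1 + p`, whose complement contains just one point of each pair, so
`t*` maximises the signature. For odd `p` we have `t* = 1/2`; for even `p` the window at `1/2` is
the same band without its top diagonal, which has `p/2 - 1` points.
-/

open Finset

namespace TorusKnot

def grid (p q : ℕ) : Finset (ℕ × ℕ) := Ioo 0 p ×ˢ Ioo 0 q

noncomputable def gridValue (p q : ℕ) (x : ℕ × ℕ) : ℝ := x.1 / p + x.2 / q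

noncomputable def window (p q : ℕ) (t : ℝ) : Finset (ℕ × ℕ) :=
  {x ∈ grid p q | t < gridValue p q x ∧ gridValue p q x < t + 1}

lemma mem_grid {p q : ℕ} {x : ℕ × ℕ} :
    x ∈ grid p q ↔ 0 < x.1 ∧ x.1 < p ∧ 0 < x.2 ∧ x.2 < q := by
  simp [grid, and_assoc]

lemma window_subset_grid {p q : ℕ} {t : ℝ} : window p q t ⊆ grid p q := filter_subset _ _

lemma latticeCount_eq_card_window (p q : ℕ) (t : ℝ) :
    latticeCount p q t = #(window p q t) := by
  rw [latticeCount, ← Set.ncard_coe_finset]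
  congr 1
  ext x
  rw [mem_coe, window, mem_filter]
  simp only [mem_grid, gridValue, Set.mem_ofPred_eq, and_assoc]

lemma sigmaT_le_sigmaT {p q : ℕ} {t t' : ℝ} (h : #(window p q t) ≤ #(window p q t')) :
    sigmaT p q t ≤ sigmaT p q t' := by
  simp only [sigmaT, latticeCount_eq_card_window]
  omega

lemma sigmaT_eq_add {p q m : ℕ} {t t' : ℝ} (h : #(window p q t') = #(window p q t) + m) :
    sigmaT p q t' = sigmaT p q t + 2 * m := by
  simp only [sigmaT, latticeCount_eq_card_window, h]
  push_cast
  ring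

lemma gridValue_add_le {p q a b : ℕ} (hp : 0 < p) (hpq : p ≤ q) (hab : a + b = q)
    (x : ℕ × ℕ) : gridValue p q x + 1 ≤ gridValue p q (x.1 + a, x.2 + b) := by
  have hp' : (0 : ℝ) < p := by exact_mod_cast hp
  have hq : (p : ℝ) ≤ q := by exact_mod_cast hpq
  have hab' : (a : ℝ) + b = q := by exact_mod_cast hab
  have ha : (a : ℝ) / q ≤ a / p := div_le_div_of_nonneg_left (by positivity) hp' hq
  have hsum : (a : ℝ) / q + b / q = 1 := by
    rw [← add_div, hab', div_self (by linarith)]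
  simp only [gridValue]
  push_cast
  rw [add_div _ (a : ℝ), add_div _ (b : ℝ)]
  linarith

lemma mul_add_lt_mul_add_iff {p s c i e : ℕ} (hi : i < p) (he : e < p) :
    s * p + i < c * p + e ↔ s < c ∨ s = c ∧ i < e := by
  rcases lt_trichotomy s c with h | rfl | h
  · have := Nat.mul_le_mul_right p (Nat.succ_le_of_lt h)
    simp only [Nat.succ_mul] at this
    omega
  · omega
  · have := Nat.mul_le_mul_right p (Nat.succ_le_of_lt h)
    simp only [Nat.succ_mul] at this
    omega

lemma mem_window_succ_iff {p : ℕ} (hp : 0 < p) (r : ℕ) {x : ℕ × ℕ} :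
    x ∈ window p (p + 1) (r / (p * (p + 1))) ↔
      x ∈ grid p (p + 1) ∧ r < (x.1 + x.2) * p + x.1 ∧
        (x.1 + x.2) * p + x.1 < r + p * (p + 1) := by
  have hp' : (0 : ℝ) < p := by exact_mod_cast hp
  have hD : (0 : ℝ) < p * (p + 1) := by positivity
  have hv : gridValue p (p + 1) x = (((x.1 + x.2) * p + x.1 : ℕ) : ℝ) / (p * (p + 1)) := by
    simp only [gridValue]
    push_cast
    field_simp
    ring
  have ht : (r : ℝ) / (p * (p + 1)) + 1 = ((r + p * (p + 1) : ℕ) : ℝ) / (p * (p + 1)) := by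
    push_cast
    field_simp
  rw [window, mem_filter, hv, ht, div_lt_div_iff_of_pos_right hD,
    div_lt_div_iff_of_pos_right hD, Nat.cast_lt, Nat.cast_lt]

noncomputable def tStar (p : ℕ) : ℝ := ((p / 2 + 1 : ℕ) : ℝ) / (p + 1)

lemma tStar_mem_Ioo {p : ℕ} (hp : 0 < p) : tStar p ∈ Set.Ioo (0 : ℝ) 1 := by
  have hlt : ((p / 2 + 1 : ℕ) : ℝ) < p + 1 := by
    have : p / 2 + 1 < p + 1 := by omega
    exact_mod_cast this
  exact ⟨by unfold tStar; positivity, (div_lt_one (by positivity)).2 hlt⟩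

lemma tStar_eq_half_of_odd {p : ℕ} (hp : ¬Even p) : tStar p = 1 / 2 := by
  have h : ((p / 2 + 1 : ℕ) : ℝ) * 2 = p + 1 := by
    have : (p / 2 + 1) * 2 = p + 1 := by
      rcases Nat.not_even_iff_odd.1 hp with ⟨a, rfl⟩
      omega
    exact_mod_cast this
  rw [tStar, div_eq_div_iff (by positivity) two_ne_zero, h, one_mul]

lemma mem_window_tStar_iff {p : ℕ} (hp : 0 < p) {x : ℕ × ℕ} :
    x ∈ window p (p + 1) (tStar p) ↔
      x ∈ grid p (p + 1) ∧ p / 2 + 1 ≤ x.1 + x.2 ∧ x.1 + x.2 ≤ p / 2 + 1 + p := by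
  have ht : tStar p = (((p / 2 + 1) * p : ℕ) : ℝ) / (p * (p + 1)) := by
    have hp' : (0 : ℝ) < p := by exact_mod_cast hp
    rw [tStar]
    push_cast
    field_simp
  rw [ht, mem_window_succ_iff hp, and_congr_right_iff]
  intro hx
  rw [mem_grid] at hx
  have hlo := mul_add_lt_mul_add_iff (s := p / 2 + 1) (c := x.1 + x.2) (i := 0) hp hx.2.1
  have hhi := mul_add_lt_mul_add_iff (s := x.1 + x.2) (c := p / 2 + p + 2) (e := 0) hx.2.1 hp
  rw [add_zero] at hlo hhi
  rw [show (p / 2 + 1) * p + p * (p + 1) = (p / 2 + p + 2) * p by ring, hlo, hhi]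
  omega

lemma mem_window_half_iff_of_even {p : ℕ} (hp : 0 < p) (he : Even p) {x : ℕ × ℕ} :
    x ∈ window p (p + 1) (1 / 2) ↔
      x ∈ grid p (p + 1) ∧ p / 2 + 1 ≤ x.1 + x.2 ∧ x.1 + x.2 < p / 2 + 1 + p := by
  obtain ⟨a, rfl⟩ := he
  have ht : (1 / 2 : ℝ) =
      ((a * (a + a) + a : ℕ) : ℝ) / ((a + a : ℕ) * ((a + a : ℕ) + 1)) := by
    have ha : (0 : ℝ) < a := by exact_mod_cast (show 0 < a by omega)
    push_cast
    field_simp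
    ring
  rw [ht, mem_window_succ_iff hp, and_congr_right_iff]
  intro hx
  rw [mem_grid] at hx
  have ha : a < a + a := by omega
  have hlo := mul_add_lt_mul_add_iff (s := a) (c := x.1 + x.2) ha hx.2.1
  have hhi := mul_add_lt_mul_add_iff (s := x.1 + x.2) (c := a + (a + a) + 1) hx.2.1 ha
  rw [show a * (a + a) + a + (a + a) * (a + a + 1) = (a + (a + a) + 1) * (a + a) + a by ring,
    hlo, hhi]
  omega

def pairingBlock (p : ℕ) : Finset (ℕ × ℕ) := Ioo 0 (p - p / 2) ×ˢ Ioo 0 (p / 2)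

def blockShift (p : ℕ) (x : ℕ × ℕ) : ℕ × ℕ := (x.1 + p / 2, x.2 + (p + 1 - p / 2))

lemma card_pairingBlock_le_card_sdiff_window {p : ℕ} (hp : 0 < p) (t : ℝ) :
    #(pairingBlock p) ≤ #(grid p (p + 1) \ window p (p + 1) t) := by
  refine card_le_card_of_injOn
    (fun x => if t < gridValue p (p + 1) x then blockShift p x else x) ?_ ?_
  · intro x hx
    simp only [pairingBlock, coe_product, coe_Ioo, Set.mem_prod, Set.mem_Ioo] at hx
    have hshift := gridValue_add_le hp (Nat.le_succ p)
      (show p / 2 + (p + 1 - p / 2) = p + 1 by omega) x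
    simp only [coe_sdiff, Set.mem_sdiff, mem_coe, window, mem_filter, mem_grid, blockShift]
    split_ifs with hv
    · refine ⟨by omega, fun h => ?_⟩
      linarith [h.2.2]
    · exact ⟨by omega, fun h => hv h.2.1⟩
  · intro x hx y hy hxy
    simp only [pairingBlock, coe_product, coe_Ioo, Set.mem_prod, Set.mem_Ioo] at hx hy
    simp only [blockShift] at hxy
    split_ifs at hxy <;> simp only [Prod.ext_iff] at hxy ⊢ <;> omega

lemma card_sdiff_window_tStar_le {p : ℕ} (hp : 0 < p) :
    #(grid p (p + 1) \ window p (p + 1) (tStar p)) ≤ #(pairingBlock p) := by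
  refine card_le_card_of_injOn
    (fun x => if x.1 + x.2 ≤ p / 2 then x else (x.1 - p / 2, x.2 - (p + 1 - p / 2))) ?_ ?_
  · intro x hx
    simp only [coe_sdiff, Set.mem_sdiff, mem_coe, mem_window_tStar_iff hp, mem_grid] at hx
    simp only [pairingBlock, coe_product, coe_Ioo, Set.mem_prod, Set.mem_Ioo]
    split_ifs <;> omega
  · intro x hx y hy hxy
    simp only [coe_sdiff, Set.mem_sdiff, mem_coe, mem_window_tStar_iff hp, mem_grid] at hx hy
    dsimp only at hxy
    split_ifs at hxy <;> simp only [Prod.ext_iff] at hxy ⊢ <;> omega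

lemma card_window_le_card_window_tStar {p : ℕ} (hp : 0 < p) (t : ℝ) :
    #(window p (p + 1) t) ≤ #(window p (p + 1) (tStar p)) := by
  have h := card_sdiff_add_card_eq_card (window_subset_grid (p := p) (q := p + 1) (t := t))
  have h' := card_sdiff_add_card_eq_card (window_subset_grid (p := p) (q := p + 1) (t := tStar p))
  have := card_sdiff_window_tStar_le hp
  have := card_pairingBlock_le_card_sdiff_window hp t
  omega

lemma sigmaMax_eq_sigmaT_tStar {p : ℕ} (hp : 0 < p) :
    sigmaMax p (p + 1) = sigmaT p (p + 1) (tStar p) :=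
  IsGreatest.csSup_eq ⟨⟨tStar p, tStar_mem_Ioo hp, rfl⟩, by
    rintro _ ⟨t, -, rfl⟩
    exact sigmaT_le_sigmaT (card_window_le_card_window_tStar hp t)⟩

lemma card_grid_filter_add_eq {p c : ℕ} (hc : p < c) :
    #{x ∈ grid p (p + 1) | x.1 + x.2 = c} = 2 * p - c := by
  rw [show 2 * p - c = p - (c - p) by omega, ← Nat.card_Ico (c - p) p]
  refine card_nbij' Prod.fst (fun i => (i, c - i)) ?_ ?_ ?_ ?_
  · intro x hx
    simp only [coe_filter, mem_grid, Set.mem_ofPred_eq, coe_Ico, Set.mem_Ico] at hx ⊢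
    omega
  · intro i hi
    simp only [coe_filter, mem_grid, Set.mem_ofPred_eq, coe_Ico, Set.mem_Ico] at hi ⊢
    omega
  · intro x hx
    simp only [coe_filter, mem_grid, Set.mem_ofPred_eq] at hx
    exact Prod.ext rfl (by dsimp only; omega)
  · intro i _
    rfl

lemma card_window_tStar_of_even {p : ℕ} (hp : 0 < p) (he : Even p) :
    #(window p (p + 1) (tStar p)) = #(window p (p + 1) (1 / 2)) + (p / 2 - 1) := by
  have hlow : {x ∈ window p (p + 1) (tStar p) | x.1 + x.2 < p / 2 + 1 + p} =
      window p (p + 1) (1 / 2) := by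
    ext x
    rw [mem_filter, mem_window_tStar_iff hp, mem_window_half_iff_of_even hp he, mem_grid]
    omega
  have hdiag : {x ∈ window p (p + 1) (tStar p) | ¬x.1 + x.2 < p / 2 + 1 + p} =
      {x ∈ grid p (p + 1) | x.1 + x.2 = p / 2 + 1 + p} := by
    ext x
    rw [mem_filter, mem_filter, mem_window_tStar_iff hp, mem_grid]
    omega
  rw [← card_filter_add_card_filter_not (fun x : ℕ × ℕ => x.1 + x.2 < p / 2 + 1 + p), hlow,
    hdiag, card_grid_filter_add_eq (by omega)]
  obtain ⟨a, rfl⟩ := he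
  omega

end TorusKnot

theorem sigmaMax_p_p_add_one (p : ℕ) (hp : 0 < p) :
    sigmaMax p (p + 1) =
      sigmaClassical p (p + 1) + (if Even p then (p : ℤ) - 2 else 0) := by
  rw [TorusKnot.sigmaMax_eq_sigmaT_tStar hp, sigmaClassical]
  split_ifs with he
  · rw [TorusKnot.sigmaT_eq_add (TorusKnot.card_window_tStar_of_even hp he)]
    obtain ⟨a, rfl⟩ := he
    omega
  · rw [TorusKnot.tStar_eq_half_of_odd he, add_zero]
end

section
/- Let p > 0 be an integer. Then σ̂(p, 2p+1) = σ(p, 2p+1) + (p − 2) if p is even, and σ̂(p, 2p+1) = σ(p, 2p+1) + (p − 1) if p is odd. -/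
open Finset

namespace TorusSignature

def grid (p q : ℕ) : Finset (ℕ × ℕ) := Ioo 0 p ×ˢ Ioo 0 q

noncomputable def value (p q : ℕ) (ij : ℕ × ℕ) : ℝ := ij.1 / p + ij.2 / q

noncomputable def excluded (p q : ℕ) (t : ℝ) : Finset (ℕ × ℕ) :=
  {ij ∈ grid p q | ¬(t < value p q ij ∧ value p q ij < t + 1)}

def triangle (p : ℕ) : Finset (ℕ × ℕ) := {ab ∈ grid p p | ab.1 + ab.2 < p}

variable {p q : ℕ}

theorem mem_grid {ij : ℕ × ℕ} :
    ij ∈ grid p q ↔ 0 < ij.1 ∧ ij.1 < p ∧ 0 < ij.2 ∧ ij.2 < q := by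
  simp [grid, and_assoc]

theorem card_grid : #(grid p q) = (p - 1) * (q - 1) := by
  simp [grid]

theorem latticeCount_eq_card_s12 (p q : ℕ) (t : ℝ) :
    latticeCount p q t = #{ij ∈ grid p q | t < value p q ij ∧ value p q ij < t + 1} := by
  rw [latticeCount, ← Set.ncard_coe_finset]
  congr 1
  ext ij
  rw [mem_coe, mem_filter, mem_grid, Set.mem_ofPred_eq]
  simp only [value, and_assoc]

theorem sigmaT_eq (hp : 0 < p) (hq : 0 < q) (t : ℝ) :
    sigmaT p q t = ((p : ℤ) - 1) * ((q : ℤ) - 1) - 2 * #(excluded p q t) := by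
  have hsplit := card_filter_add_card_filter_not (s := grid p q)
    (fun ij => t < value p q ij ∧ value p q ij < t + 1)
  rw [card_grid] at hsplit
  have hp1 : 1 ≤ p := hp
  have hq1 : 1 ≤ q := hq
  zify [hp1, hq1] at hsplit
  rw [sigmaT, latticeCount_eq_card_s12, excluded]
  linarith

theorem mem_excluded_or_mem_excluded {u w : ℕ × ℕ} (hu : u ∈ grid p q) (hw : w ∈ grid p q)
    (huw : value p q u + 1 ≤ value p q w) (t : ℝ) :
    u ∈ excluded p q t ∨ w ∈ excluded p q t := by
  simp only [excluded, mem_filter, hu, hw, true_and, ← not_and_or]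
  rintro ⟨⟨htu, -⟩, -, hwt⟩
  linarith

theorem sigmaMax_eq_sigmaT (hp : 0 < p) (hq : 0 < q) {t₀ : ℝ} (ht₀ : t₀ ∈ Set.Ioo 0 1)
    (hmin : ∀ t, #(excluded p q t₀) ≤ #(excluded p q t)) : sigmaMax p q = sigmaT p q t₀ := by
  refine IsGreatest.csSup_eq ⟨⟨t₀, ht₀, rfl⟩, ?_⟩
  rintro _ ⟨t, -, rfl⟩
  rw [sigmaT_eq hp hq, sigmaT_eq hp hq]
  have : (#(excluded p q t₀) : ℤ) ≤ #(excluded p q t) := by exact_mod_cast hmin t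
  linarith

theorem value_add_one_le_value_shift (hp : 0 < p) (hpq : 2 * p ≤ q) (a : ℕ) {b : ℕ}
    (hb : b ≤ q) : value p q (a, b) + 1 ≤ value p q (a + b, q - b) := by
  have hp' : (0 : ℝ) < p := by exact_mod_cast hp
  have hpq' : (2 * p : ℝ) ≤ q := by exact_mod_cast hpq
  have hq' : (q : ℝ) ≠ 0 := by linarith
  have hgap : value p q (a + b, q - b) - (value p q (a, b) + 1) = b * (q - 2 * p) / (p * q) := by
    simp only [value]
    rw [Nat.cast_sub hb]
    push_cast
    field_simp
    ring
  have : 0 ≤ (b : ℝ) * (q - 2 * p) / (p * q) :=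
    div_nonneg (mul_nonneg b.cast_nonneg (by linarith)) (by positivity)
  linarith

theorem card_triangle_le_card_excluded (hp : 0 < p) (hpq : 2 * p ≤ q) (t : ℝ) :
    #(triangle p) ≤ #(excluded p q t) := by
  let partner : ℕ × ℕ → ℕ × ℕ := fun ab => (ab.1 + ab.2, q - ab.2)
  refine card_le_card_of_injOn
    (fun ab => if ab ∈ excluded p q t then ab else partner ab) (fun ab hab => ?_) ?_
  · have hab' := hab
    simp only [mem_coe, triangle, mem_filter, mem_grid] at hab'
    have hgrid : ab ∈ grid p q := mem_grid.2 (by omega)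
    have hpartner : partner ab ∈ grid p q := mem_grid.2 (by simp only [partner]; omega)
    dsimp only
    split_ifs with h
    · exact h
    · exact (mem_excluded_or_mem_excluded hgrid hpartner
        (value_add_one_le_value_shift hp hpq _ (by omega)) t).resolve_left h
  · intro u hu w hw huw
    simp only [coe_filter, triangle, mem_grid, Set.mem_ofPred_eq] at hu hw
    dsimp only [partner] at huw
    split_ifs at huw <;> simp only [Prod.ext_iff] at huw ⊢ <;> omega

theorem value_two_mul_add_one (hp : 0 < p) (i j : ℕ) :
    value p (2 * p + 1) (i, j) = (((2 * i + j : ℕ) : ℝ) + i / p) / (2 * p + 1) := by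
  have hp' : (p : ℝ) ≠ 0 := by exact_mod_cast hp.ne'
  simp only [value]
  push_cast
  field_simp
  ring

theorem two_mul_div_lt_one_iff (hp : 0 < p) (i : ℕ) : 2 * ((i : ℝ) / p) < 1 ↔ 2 * i < p := by
  rw [← mul_div_assoc, div_lt_one (by exact_mod_cast hp)]
  exact_mod_cast Iff.rfl

theorem excluded_tStar (hp : 0 < p) :
    excluded p (2 * p + 1) (p / (2 * p + 1)) =
      {ij ∈ grid p (2 * p + 1) | 2 * ij.1 + ij.2 < p ∨ 3 * p < 2 * ij.1 + ij.2} := by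
  ext ⟨i, j⟩
  simp only [excluded, mem_filter, and_congr_right_iff]
  intro hij
  obtain ⟨hi, hip, -, -⟩ := mem_grid.1 hij
  have hx0 : 0 < (i : ℝ) / p := by positivity
  have hx1 : (i : ℝ) / p < 1 := (div_lt_one (by exact_mod_cast hp)).2 (by exact_mod_cast hip)
  have hq : (0 : ℝ) < 2 * p + 1 := by positivity
  rw [show (p / (2 * p + 1) : ℝ) + 1 = (3 * p + 1) / (2 * p + 1) by field_simp; ring,
    value_two_mul_add_one hp, not_and_or, not_lt, not_lt, div_le_div_iff_of_pos_right hq,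
    div_le_div_iff_of_pos_right hq]
  generalize 2 * i + j = m
  refine or_congr ⟨fun h => ?_, fun h => ?_⟩ ⟨fun h => ?_, fun h => ?_⟩
  · exact_mod_cast (show (m : ℝ) < p by linarith)
  · have : (m : ℝ) + 1 ≤ p := by exact_mod_cast h
    linarith
  · exact_mod_cast (show (3 * p : ℝ) < m by linarith)
  · have : (3 * p : ℝ) + 1 ≤ m := by exact_mod_cast h
    linarith

theorem excluded_half (hp : 0 < p) :
    excluded p (2 * p + 1) (1 / 2) =
      {ij ∈ grid p (2 * p + 1) | 2 * ij.1 + ij.2 ≤ p ∨ 3 * p < 2 * ij.1 + ij.2} := by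
  ext ⟨i, j⟩
  simp only [excluded, mem_filter, and_congr_right_iff]
  intro hij
  obtain ⟨hi, hip, hj, hjq⟩ := mem_grid.1 hij
  have hx0 : 0 < (i : ℝ) / p := by positivity
  have hx1 : (i : ℝ) / p < 1 := (div_lt_one (by exact_mod_cast hp)).2 (by exact_mod_cast hip)
  have hq : (0 : ℝ) < 2 * p + 1 := by positivity
  rw [show (1 / 2 : ℝ) = (p + 1 / 2) / (2 * p + 1) by field_simp,
    show ((p + 1 / 2) / (2 * p + 1) : ℝ) + 1 = (3 * p + 3 / 2) / (2 * p + 1) by field_simp; ring,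
    value_two_mul_add_one hp, not_and_or, not_lt, not_lt, div_le_div_iff_of_pos_right hq,
    div_le_div_iff_of_pos_right hq]
  refine or_congr ⟨fun h => ?_, fun h => ?_⟩ ⟨fun h => ?_, fun h => ?_⟩
  · have : ((2 * i + j : ℕ) : ℝ) < p + 1 := by linarith
    exact Nat.lt_succ_iff.1 (by exact_mod_cast this)
  · -- on this line `2i < p`, so the fractional part `i/p` stays below `1/2`
    have hx : 2 * ((i : ℝ) / p) < 1 := (two_mul_div_lt_one_iff hp i).2 (by omega)
    have : ((2 * i + j : ℕ) : ℝ) ≤ p := by exact_mod_cast h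
    linarith
  · exact_mod_cast (show (3 * p : ℝ) < (2 * i + j : ℕ) by linarith)
  · -- as `j ≤ 2p`, here `2i > p`, so the fractional part `i/p` is at least `1/2`
    have hx : 1 ≤ 2 * ((i : ℝ) / p) := not_lt.1 fun h' => by
      have := (two_mul_div_lt_one_iff hp i).1 h'
      omega
    have : (3 * p : ℝ) + 1 ≤ (2 * i + j : ℕ) := by exact_mod_cast h
    linarith

theorem card_filter_two_mul_add_eq :
    #{ij ∈ grid p (2 * p + 1) | 2 * ij.1 + ij.2 = p} = (p - 1) / 2 := by
  rw [show (p - 1) / 2 = #(Ioo 0 ((p + 1) / 2)) by simp; omega]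
  refine card_nbij' Prod.fst (fun i => (i, p - 2 * i)) (fun ij h => ?_) (fun i h => ?_)
    (fun ij h => ?_) (fun i h => ?_) <;> simp [mem_grid, Prod.ext_iff] at h ⊢ <;> omega

theorem card_excluded_half (hp : 0 < p) :
    #(excluded p (2 * p + 1) (1 / 2)) =
      #(excluded p (2 * p + 1) (p / (2 * p + 1))) + (p - 1) / 2 := by
  rw [excluded_half hp, excluded_tStar hp, ← card_filter_two_mul_add_eq,
    ← card_union_of_disjoint (disjoint_filter.2 fun _ _ _ => by omega), ← filter_or]
  exact congrArg card (filter_congr fun _ _ => by omega)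

theorem card_excluded_tStar_le_card_triangle (hp : 0 < p) :
    #(excluded p (2 * p + 1) (p / (2 * p + 1))) ≤ #(triangle p) := by
  rw [excluded_tStar hp]
  -- `{2i + j < p}` lands on even `a`; `{2i + j > 3p}`, reflected by `(i, j) ↦ (p - i, q - j)`,
  -- on odd `a`
  refine card_le_card_of_injOn (fun ij => if 2 * ij.1 + ij.2 < p then (2 * ij.1, ij.2)
      else (2 * (p - ij.1) - 1, 2 * p + 1 - ij.2)) (fun ij hij => ?_) ?_
  · simp only [mem_coe, triangle, mem_filter, mem_grid] at hij ⊢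
    split_ifs <;> omega
  · intro u hu w hw huw
    simp only [coe_filter, mem_grid, Set.mem_ofPred_eq] at hu hw
    dsimp only at huw
    split_ifs at huw <;> simp only [Prod.ext_iff] at huw ⊢ <;> omega

end TorusSignature

open TorusSignature

theorem sigmaMax_p_two_p_add_one (p : ℕ) (hp : 0 < p) :
    sigmaMax p (2 * p + 1) =
      sigmaClassical p (2 * p + 1) + (if Even p then (p : ℤ) - 2 else (p : ℤ) - 1) := by
  have htStar : (p / (2 * p + 1) : ℝ) ∈ Set.Ioo 0 1 :=
    ⟨by positivity, (div_lt_one (by positivity)).2 (by linarith)⟩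
  rw [sigmaMax_eq_sigmaT hp (by omega) htStar fun t =>
      (card_excluded_tStar_le_card_triangle hp).trans
        (card_triangle_le_card_excluded hp (by omega) t),
    sigmaClassical, sigmaT_eq hp (by omega), sigmaT_eq hp (by omega), card_excluded_half hp]
  push_cast
  split_ifs with h
  · obtain ⟨k, rfl⟩ := h
    omega
  · obtain ⟨k, rfl⟩ := Nat.not_even_iff_odd.1 h
    omega
end

section
/- Let p > 0 be an integer. Then σ̂(p, 2p+1) = p² + p − 2. -/
/-!
Split Litherland's count into rows `i = 1, …, p - 1`; row `i` counts the `j ∈ (0, q)` in an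
open window of length `q` whose position moves by `q/p` per unit of `i`. Hence, for
`q = 2p + 1` and `2i ≠ p`, row `p - i` lies strictly to the left of row `i` translated by
`d = 4 min(i, p - i) + 1`, so the two rows fit disjointly into `{1, …, q - 1 + d}`. At
`t = (2p² + 1)/(2pq)` all these pair bounds are attained, row `i` having exactly
`p + min(2i + 1, 2(p - i))` points, and summing gives `σ_t = p² + p - 2`.
-/

open Finset

noncomputable def latticeRow (p q : ℕ) (t : ℝ) (i : ℕ) : Finset ℕ :=
  (Ioo 0 q).filter fun j =>
    t < (i : ℝ) / p + (j : ℝ) / q ∧ (i : ℝ) / p + (j : ℝ) / q < t + 1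

lemma mem_latticeRow {p q : ℕ} {t : ℝ} {i j : ℕ} :
    j ∈ latticeRow p q t i ↔ 0 < j ∧ j < q ∧
      t < (i : ℝ) / p + (j : ℝ) / q ∧ (i : ℝ) / p + (j : ℝ) / q < t + 1 := by
  rw [latticeRow, mem_filter, mem_Ioo, and_assoc]

lemma mem_latticeRow_iff_mul {p q : ℕ} (hp : 0 < p) (hq : 0 < q) {t : ℝ} {i j : ℕ} :
    j ∈ latticeRow p q t i ↔ 0 < j ∧ j < q ∧
      t * (p * q) < ((q * i + p * j : ℕ) : ℝ) ∧
      ((q * i + p * j : ℕ) : ℝ) < (t + 1) * (p * q) := by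
  have hpq : (0 : ℝ) < p * q := by positivity
  have hsum : (i : ℝ) / p + (j : ℝ) / q = ((q * i + p * j : ℕ) : ℝ) / (p * q) := by
    push_cast; field_simp
  rw [mem_latticeRow, hsum, lt_div_iff₀ hpq, div_lt_iff₀ hpq]

lemma latticeCount_eq_sum_card_latticeRow (p q : ℕ) (t : ℝ) :
    latticeCount p q t = ∑ i ∈ Ico 1 p, #(latticeRow p q t i) := by
  have hset : {ij : ℕ × ℕ | 0 < ij.1 ∧ ij.1 < p ∧ 0 < ij.2 ∧ ij.2 < q ∧
      t < (ij.1 : ℝ) / p + (ij.2 : ℝ) / q ∧ (ij.1 : ℝ) / p + (ij.2 : ℝ) / q < t + 1} =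
      ↑((Ico 1 p ×ˢ Ioo 0 q).filter fun ij => t < (ij.1 : ℝ) / p + (ij.2 : ℝ) / q ∧
        (ij.1 : ℝ) / p + (ij.2 : ℝ) / q < t + 1) := by
    ext ⟨i, j⟩
    simp only [Set.mem_ofPred_eq, coe_filter, mem_product, mem_Ico, mem_Ioo,
      Nat.one_le_iff_ne_zero, Nat.pos_iff_ne_zero, and_assoc]
  rw [latticeCount, hset, Set.ncard_coe_finset, card_filter, sum_product]
  exact sum_congr rfl fun i _ => (card_filter _ _).symm

lemma card_latticeRow_le (p q : ℕ) (t : ℝ) (i : ℕ) : #(latticeRow p q t i) ≤ q - 1 :=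
  (card_filter_le _ _).trans (by simp)

/-- `h` is `q (k - i) / p ≥ q - d` with denominators and subtractions cleared. -/
lemma card_latticeRow_add_card_latticeRow_le {p q : ℕ} (hp : 0 < p) (t : ℝ) {i k d : ℕ}
    (h : q * (p + i) ≤ d * p + q * k) :
    #(latticeRow p q t i) + #(latticeRow p q t k) ≤ q - 1 + d := by
  rcases Nat.eq_zero_or_pos q with rfl | hq
  · simp [latticeRow]
  have hsep : ∀ a ∈ latticeRow p q t i, ∀ b ∈ latticeRow p q t k, b < a + d := by
    intro a ha b hb
    rw [mem_latticeRow_iff_mul hp hq] at ha hb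
    have hlt : q * k + p * b < q * i + p * a + p * q := by
      have : ((q * k + p * b : ℕ) : ℝ) < ((q * i + p * a + p * q : ℕ) : ℝ) := by
        push_cast at ha hb ⊢; linarith
      exact_mod_cast this
    have : p * b < p * (a + d) := by nlinarith
    exact Nat.lt_of_mul_lt_mul_left this
  set A := (latticeRow p q t i).map (addRightEmbedding d)
  have hdisj : Disjoint A (latticeRow p q t k) := by
    rw [disjoint_left]
    rintro _ hA hb
    obtain ⟨a, ha, rfl⟩ := mem_map.mp hA
    exact (hsep a ha _ hb).false
  have hsub : A ∪ latticeRow p q t k ⊆ Icc 1 (q - 1 + d) := by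
    intro j hj
    rcases mem_union.mp hj with hj | hj
    · obtain ⟨a, ha, rfl⟩ := mem_map.mp hj
      have := mem_latticeRow.mp ha
      simp only [addRightEmbedding_apply, mem_Icc]; omega
    · have := mem_latticeRow.mp hj
      rw [mem_Icc]; omega
  calc #(latticeRow p q t i) + #(latticeRow p q t k) = #(A ∪ latticeRow p q t k) := by
        rw [card_union_of_disjoint hdisj, card_map]
    _ ≤ #(Icc 1 (q - 1 + d)) := card_le_card hsub
    _ = q - 1 + d := by simp

lemma two_mul_latticeCount_eq_sum (p q : ℕ) (t : ℝ) :
    2 * latticeCount p q t =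
      ∑ i ∈ Ico 1 p, (#(latticeRow p q t i) + #(latticeRow p q t (p - i))) := by
  rw [sum_add_distrib, latticeCount_eq_sum_card_latticeRow,
    sum_Ico_reflect (fun i => #(latticeRow p q t i)) 1 (by omega), Nat.add_sub_cancel_left,
    Nat.add_sub_cancel, two_mul]

/-- `σ_t(p,q)` can only jump where `i/p + j/q - t ∈ {0, 1}`, i.e. at `t = m/(pq)`; this is the
midpoint of `(m/(pq), (m+1)/(pq))`. -/
noncomputable def jumpMidpoint (p q m : ℕ) : ℝ := (2 * m + 1) / (2 * p * q)

lemma mem_latticeRow_jumpMidpoint {p q : ℕ} (hp : 0 < p) (hq : 0 < q) (m : ℕ) {i j : ℕ} :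
    j ∈ latticeRow p q (jumpMidpoint p q m) i ↔
      0 < j ∧ j < q ∧ m < q * i + p * j ∧ q * i + p * j ≤ m + p * q := by
  have hpq : (p : ℝ) * q ≠ 0 := by positivity
  have hmul : jumpMidpoint p q m * (p * q) = m + 1 / 2 := by
    rw [jumpMidpoint]; field_simp
  rw [mem_latticeRow_iff_mul hp hq, add_mul, one_mul, hmul]
  have h1 : ((m : ℝ) + 1 / 2 < ((q * i + p * j : ℕ) : ℝ)) ↔ m < q * i + p * j := by
    constructor
    · intro h; exact_mod_cast (by linarith : (m : ℝ) < ((q * i + p * j : ℕ) : ℝ))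
    · intro h
      have : ((m + 1 : ℕ) : ℝ) ≤ ((q * i + p * j : ℕ) : ℝ) := by exact_mod_cast h
      push_cast at this ⊢; linarith
  have h2 : ((q * i + p * j : ℕ) : ℝ) < (m : ℝ) + 1 / 2 + p * q ↔
      q * i + p * j ≤ m + p * q := by
    constructor
    · intro h
      have : ((q * i + p * j : ℕ) : ℝ) < ((m + p * q + 1 : ℕ) : ℝ) := by
        push_cast at h ⊢; linarith
      exact Nat.lt_succ_iff.mp (by exact_mod_cast this)
    · intro h
      have : ((q * i + p * j : ℕ) : ℝ) ≤ ((m + p * q : ℕ) : ℝ) := by exact_mod_cast h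
      push_cast at this ⊢; linarith
  rw [h1, h2]

lemma latticeRow_jumpMidpoint_sq {p i : ℕ} (hi : 0 < i) (hip : i < p) :
    latticeRow p (2 * p + 1) (jumpMidpoint p (2 * p + 1) (p ^ 2)) i =
      Icc (max 1 (p - 2 * i)) (min (2 * p) (3 * p - 2 * i)) := by
  ext j
  rw [mem_latticeRow_jumpMidpoint (by omega) (by omega), mem_Icc]
  have hlow : p ^ 2 < (2 * p + 1) * i + p * j ↔ p ≤ 2 * i + j := by
    constructor
    · intro h; by_contra! hj; nlinarith [Nat.mul_le_mul_left p hj]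
    · intro h; nlinarith [Nat.mul_le_mul_left p h]
  have hhigh : (2 * p + 1) * i + p * j ≤ p ^ 2 + p * (2 * p + 1) ↔ 2 * i + j ≤ 3 * p := by
    constructor
    · intro h; by_contra! hj; nlinarith [Nat.mul_le_mul_left p hj]
    · intro h; nlinarith [Nat.mul_le_mul_left p h]
  rw [hlow, hhigh]
  omega

lemma card_latticeRow_jumpMidpoint_sq {p i : ℕ} (hi : 0 < i) (hip : i < p) :
    #(latticeRow p (2 * p + 1) (jumpMidpoint p (2 * p + 1) (p ^ 2)) i) =
      p + min (2 * i + 1) (2 * (p - i)) := by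
  rw [latticeRow_jumpMidpoint_sq hi hip, Nat.card_Icc]
  omega

lemma card_latticeRow_add_card_latticeRow_sub_le {p i : ℕ} (hi : 0 < i) (hip : i < p) (t : ℝ) :
    #(latticeRow p (2 * p + 1) t i) + #(latticeRow p (2 * p + 1) t (p - i)) ≤
      #(latticeRow p (2 * p + 1) (jumpMidpoint p (2 * p + 1) (p ^ 2)) i) +
        #(latticeRow p (2 * p + 1) (jumpMidpoint p (2 * p + 1) (p ^ 2)) (p - i)) := by
  rw [card_latticeRow_jumpMidpoint_sq hi hip,
    card_latticeRow_jumpMidpoint_sq (by omega : 0 < p - i) (by omega)]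
  obtain ⟨k, rfl⟩ : ∃ k, p = i + k := ⟨p - i, by omega⟩
  rw [Nat.add_sub_cancel_left]
  rcases lt_trichotomy i k with hik | rfl | hki
  · have := card_latticeRow_add_card_latticeRow_le (p := i + k) (q := 2 * (i + k) + 1) (by omega) t
      (i := i) (k := k) (d := 4 * i + 1) (by nlinarith)
    omega
  · have := card_latticeRow_le (i + i) (2 * (i + i) + 1) t i
    omega
  · have := card_latticeRow_add_card_latticeRow_le (p := i + k) (q := 2 * (i + k) + 1) (by omega) t
      (i := k) (k := i) (d := 4 * k + 1) (by nlinarith)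
    omega

lemma latticeCount_le_latticeCount_jumpMidpoint_sq (p : ℕ) (t : ℝ) :
    latticeCount p (2 * p + 1) t ≤
      latticeCount p (2 * p + 1) (jumpMidpoint p (2 * p + 1) (p ^ 2)) := by
  have h := sum_le_sum fun i (hi : i ∈ Ico 1 p) =>
    card_latticeRow_add_card_latticeRow_sub_le (mem_Ico.mp hi).1 (mem_Ico.mp hi).2 t
  rw [← two_mul_latticeCount_eq_sum, ← two_mul_latticeCount_eq_sum] at h
  omega

lemma two_mul_sum_range_min (p : ℕ) :
    2 * ∑ i ∈ range p, min (2 * i + 1) (2 * (p - i)) = p * (p + 1) := by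
  induction p using Nat.twoStepInduction with
  | zero => simp
  | one => simp
  | more p ih _ =>
    have hshift : ∀ i ∈ range (p + 1),
        min (2 * (i + 1) + 1) (2 * (p + 2 - (i + 1))) = min (2 * i + 1) (2 * (p - i)) + 2 := by
      intro i hi
      rw [mem_range] at hi
      omega
    rw [sum_range_succ', sum_congr rfl hshift, sum_add_distrib, sum_range_succ]
    have hbot : min (2 * 0 + 1) (2 * (p + 2 - 0)) = 1 := by omega
    have htop : min (2 * p + 1) (2 * (p - p)) = 0 := by omega
    rw [hbot, htop, sum_const, card_range, smul_eq_mul]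
    linarith

lemma sigmaT_jumpMidpoint_sq {p : ℕ} (hp : 0 < p) :
    sigmaT p (2 * p + 1) (jumpMidpoint p (2 * p + 1) (p ^ 2)) = (p : ℤ) ^ 2 + p - 2 := by
  have hcount : latticeCount p (2 * p + 1) (jumpMidpoint p (2 * p + 1) (p ^ 2)) =
      (p - 1) * p + ∑ i ∈ Ico 1 p, min (2 * i + 1) (2 * (p - i)) := by
    rw [latticeCount_eq_sum_card_latticeRow, sum_congr rfl fun i hi =>
      card_latticeRow_jumpMidpoint_sq (mem_Ico.mp hi).1 (mem_Ico.mp hi).2, sum_add_distrib,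
      sum_const, Nat.card_Ico, smul_eq_mul]
  have hsum := two_mul_sum_range_min p
  rw [sum_range_eq_add_Ico _ hp, show min (2 * 0 + 1) (2 * (p - 0)) = 1 by omega] at hsum
  obtain ⟨n, rfl⟩ : ∃ n, p = n + 1 := ⟨p - 1, by omega⟩
  rw [sigmaT, hcount]
  push_cast at hsum ⊢
  linarith

lemma jumpMidpoint_sq_mem_Ioo {p : ℕ} (hp : 0 < p) :
    jumpMidpoint p (2 * p + 1) (p ^ 2) ∈ Set.Ioo (0 : ℝ) 1 := by
  have hp' : (1 : ℝ) ≤ p := by exact_mod_cast hp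
  rw [jumpMidpoint, Set.mem_Ioo, div_lt_one (by positivity)]
  push_cast
  constructor
  · positivity
  · nlinarith

theorem sigmaMax_p_two_p_add_one_value (p : ℕ) (hp : 0 < p) :
    sigmaMax p (2 * p + 1) = (p : ℤ) ^ 2 + p - 2 := by
  have hgreatest : IsGreatest (sigmaT p (2 * p + 1) '' Set.Ioo 0 1)
      (sigmaT p (2 * p + 1) (jumpMidpoint p (2 * p + 1) (p ^ 2))) := by
    refine ⟨Set.mem_image_of_mem _ (jumpMidpoint_sq_mem_Ioo hp), ?_⟩
    rintro _ ⟨t, -, rfl⟩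
    have := latticeCount_le_latticeCount_jumpMidpoint_sq p t
    simp only [sigmaT]
    omega
  rw [sigmaMax, hgreatest.csSup_eq, sigmaT_jumpMidpoint_sq hp]
end

section
/- For every integer N there exist coprime integers 0 < p < q such that σ̂(p,q) − σ(p,q) ≥ N; that is, the difference between the maximum signature and the classical signature of torus knots is unbounded. -/
/-!
Take `p = 2m`, `q = 2m + 1`. A lattice point `(i, j)` has `i/p + j/q = v/(pq)` with
`v = i q + j p = 2m(i + j) + i`. Lowering `t` from `1/2 = (2m² + m)/(pq)` to `2m²/(pq)` keeps
every point of the strip `t < v/(pq) < t + 1` (a point lost at the top would need `i + j = 3m + 1`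
and `i < m`, forcing `j > 2m`) and gains the `m - 1` points `(i, m - i)`, `0 < i < m`, with
`v = 2m² + i`. So `σ̂ ≥ σ_{2m²/pq} ≥ σ + 2(m - 1)`.
-/

open Finset

namespace TorusSignature

def stripPoints (p q a : ℕ) : Finset (ℕ × ℕ) :=
  (Ioo 0 p ×ˢ Ioo 0 q).filter
    fun ij => a < ij.1 * q + ij.2 * p ∧ ij.1 * q + ij.2 * p < a + p * q

@[simp]
lemma mem_stripPoints {p q a i j : ℕ} :
    (i, j) ∈ stripPoints p q a ↔ (0 < i ∧ i < p) ∧ (0 < j ∧ j < q) ∧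
      a < i * q + j * p ∧ i * q + j * p < a + p * q := by
  simp [stripPoints, and_assoc]

lemma div_add_div_mem_strip_iff {p q : ℕ} (hp : 0 < p) (hq : 0 < q) (a i j : ℕ) :
    ((a : ℝ) / (p * q) < i / p + j / q ∧ (i : ℝ) / p + j / q < a / (p * q) + 1) ↔
      (a < i * q + j * p ∧ i * q + j * p < a + p * q) := by
  have hpq : (0 : ℝ) < p * q := by positivity
  have hsum : (i : ℝ) / p + j / q = ((i * q + j * p : ℕ) : ℝ) / (p * q) := by
    push_cast
    field_simp
  have hshift : (a : ℝ) / (p * q) + 1 = ((a + p * q : ℕ) : ℝ) / (p * q) := by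
    push_cast
    field_simp
  rw [hsum, hshift, div_lt_div_iff_of_pos_right hpq, div_lt_div_iff_of_pos_right hpq]
  exact_mod_cast Iff.rfl

lemma latticeCount_div_mul {p q : ℕ} (hp : 0 < p) (hq : 0 < q) (a : ℕ) :
    latticeCount p q ((a : ℝ) / (p * q)) = #(stripPoints p q a) := by
  rw [latticeCount, ← Set.ncard_coe_finset]
  congr 1
  ext ⟨i, j⟩
  rw [mem_coe, mem_stripPoints, ← div_add_div_mem_strip_iff hp hq]
  simp only [Set.mem_ofPred_eq, and_assoc]

lemma latticeCount_le_mul (p q : ℕ) (t : ℝ) : latticeCount p q t ≤ p * q := by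
  calc latticeCount p q t ≤ (↑(range p ×ˢ range q) : Set (ℕ × ℕ)).ncard := by
        refine Set.ncard_le_ncard ?_ (finite_toSet _)
        rintro ⟨i, j⟩ ⟨-, hi, -, hj, -⟩
        simp [hi, hj]
    _ = p * q := by rw [Set.ncard_coe_finset, card_product, card_range, card_range]

lemma bddAbove_sigmaT_image (p q : ℕ) (s : Set ℝ) : BddAbove (sigmaT p q '' s) := by
  refine ⟨2 * p * q + p + q, ?_⟩
  rintro _ ⟨t, -, rfl⟩
  have hcount : (latticeCount p q t : ℤ) ≤ p * q := by exact_mod_cast latticeCount_le_mul p q t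
  have hpq : (0 : ℤ) ≤ p * q := by positivity
  rw [sigmaT]
  nlinarith

lemma sigmaT_le_sigmaMax {p q : ℕ} {t : ℝ} (ht : t ∈ Set.Ioo 0 1) :
    sigmaT p q t ≤ sigmaMax p q :=
  le_csSup (bddAbove_sigmaT_image p q _) ⟨t, ht, rfl⟩

section ConsecutiveIntegers

variable {m i j : ℕ}

lemma lattice_value_lt_of_lt (hi : i < 2 * m) (hj : j < 2 * m + 1)
    (hv : i * (2 * m + 1) + j * (2 * m) < 6 * m ^ 2 + 3 * m) :
    i * (2 * m + 1) + j * (2 * m) < 6 * m ^ 2 + 2 * m := by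
  have hv_eq : i * (2 * m + 1) + j * (2 * m) = 2 * m * (i + j) + i := by ring
  rw [hv_eq] at hv ⊢
  by_contra! hge
  have hsum : i + j = 3 * m + 1 := by
    apply le_antisymm <;> nlinarith
  rw [hsum] at hv
  have : i < m := by nlinarith
  omega

lemma stripPoints_half_subset :
    stripPoints (2 * m) (2 * m + 1) (2 * m ^ 2 + m) ⊆
      stripPoints (2 * m) (2 * m + 1) (2 * m ^ 2) := by
  rintro ⟨i, j⟩ hmem
  obtain ⟨⟨hi0, hi⟩, ⟨hj0, hj⟩, hlo, hhi⟩ := mem_stripPoints.mp hmem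
  have hup := lattice_value_lt_of_lt hi hj (by nlinarith)
  exact mem_stripPoints.mpr ⟨⟨hi0, hi⟩, ⟨hj0, hj⟩, by omega, by nlinarith⟩

lemma antidiagonal_mem_stripPoints_sdiff (hi : i ∈ Ico 1 m) :
    (i, m - i) ∈ stripPoints (2 * m) (2 * m + 1) (2 * m ^ 2) \
      stripPoints (2 * m) (2 * m + 1) (2 * m ^ 2 + m) := by
  rw [mem_Ico] at hi
  obtain ⟨k, rfl⟩ : ∃ k, m = i + k := ⟨m - i, by omega⟩
  have hv : i * (2 * (i + k) + 1) + (i + k - i) * (2 * (i + k)) = 2 * (i + k) ^ 2 + i := by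
    rw [Nat.add_sub_cancel_left]
    ring
  simp only [mem_sdiff, mem_stripPoints, hv]
  refine ⟨⟨⟨by omega, by omega⟩, ⟨by omega, by omega⟩, by omega, by nlinarith⟩, ?_⟩
  omega

lemma card_stripPoints_half_add_le :
    #(stripPoints (2 * m) (2 * m + 1) (2 * m ^ 2 + m)) + (m - 1) ≤
      #(stripPoints (2 * m) (2 * m + 1) (2 * m ^ 2)) := by
  have hgain : (Ico 1 m).image (fun i => (i, m - i)) ⊆
      stripPoints (2 * m) (2 * m + 1) (2 * m ^ 2) \
        stripPoints (2 * m) (2 * m + 1) (2 * m ^ 2 + m) := by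
    intro x hx
    obtain ⟨i, hi, rfl⟩ := mem_image.mp hx
    exact antidiagonal_mem_stripPoints_sdiff hi
  have hinj : Function.Injective (fun i : ℕ => (i, m - i)) := fun _ _ h => congrArg Prod.fst h
  have hgain_card := card_le_card hgain
  rw [card_image_of_injective _ hinj, Nat.card_Ico] at hgain_card
  have hsplit := card_sdiff_add_card_eq_card (stripPoints_half_subset (m := m))
  omega

theorem sigmaClassical_add_le_sigmaMax (hm : 0 < m) :
    sigmaClassical (2 * m) (2 * m + 1) + 2 * ((m : ℤ) - 1) ≤
      sigmaMax (2 * m) (2 * m + 1) := by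
  have hm' : (1 : ℝ) ≤ m := by exact_mod_cast hm
  have hpq : ((2 * m : ℕ) : ℝ) * (2 * m + 1 : ℕ) = 2 * m * (2 * m + 1) := by push_cast; ring
  have hhalf :
      (1 / 2 : ℝ) = ((2 * m ^ 2 + m : ℕ) : ℝ) / ((2 * m : ℕ) * (2 * m + 1 : ℕ)) := by
    rw [hpq]
    field_simp
    push_cast
    ring
  set t₀ : ℝ := ((2 * m ^ 2 : ℕ) : ℝ) / ((2 * m : ℕ) * (2 * m + 1 : ℕ)) with ht₀_def
  have ht₀ : t₀ ∈ Set.Ioo 0 1 := by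
    rw [Set.mem_Ioo, ht₀_def, hpq, div_lt_one (by positivity)]
    push_cast
    exact ⟨by positivity, by nlinarith⟩
  have hcount := card_stripPoints_half_add_le (m := m)
  have hgain : sigmaClassical (2 * m) (2 * m + 1) + 2 * ((m : ℤ) - 1) ≤
      sigmaT (2 * m) (2 * m + 1) t₀ := by
    rw [sigmaClassical, sigmaT, sigmaT, hhalf, latticeCount_div_mul (by omega) (by omega),
      latticeCount_div_mul (by omega) (by omega)]
    omega
  exact hgain.trans (sigmaT_le_sigmaMax ht₀)

end ConsecutiveIntegers

end TorusSignature

open TorusSignature in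
theorem sigmaMax_sub_sigma_unbounded (N : ℤ) :
    ∃ p q : ℕ, 0 < p ∧ p < q ∧ Nat.Coprime p q ∧
      N ≤ sigmaMax p q - sigmaClassical p q := by
  set m := N.toNat + 1
  refine ⟨2 * m, 2 * m + 1, by omega, by omega,
    Nat.coprime_self_add_right.mpr (Nat.coprime_one_right _), ?_⟩
  have hgap := sigmaClassical_add_le_sigmaMax (m := m) (by omega)
  omega
end
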